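/- arXiv:2303.11187 — 6 statements merged into one kernel-verified Lean document; each statement's English description precedes it below -/
import Mathlib

section
/- Under the CCB-IV assumptions (i), (ii) and (iv) (completeness is not needed), the following identification identity holds: E[Y | Z ; R_Z = 1] = E[g*(A, X) | Z ; R_Z = 1] almost surely, where g*(x, a) = f(a, x) + e(x) is the CATE. -/
/-!
Since `Y = f (A, X) + ε`, it suffices that `ε` and `e ∘ X` have the same integral over every set
`{Z ∈ B} ∩ {R_Z = 1}`. By (iv), `ε` may be replaced there by `E[ε | X, Z]`, and by (ii)
`E[ε | X, Z] = E[ε | X] = e ∘ X`. Both steps rest on one fact: if `g ⫫ h | m`, then `h` and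
`E[h | m]` have the same integral over `s ∩ {g ∈ T}` for every `s ∈ m`.
-/

open MeasureTheory ProbabilityTheory MeasurableSpace

namespace ProbabilityTheory

variable {Ω : Type*} {m : MeasurableSpace Ω} [mΩ : MeasurableSpace Ω] {μ : Measure Ω}
  {s t : Set Ω}

lemma setIntegral_mul_condExp_of_bound [IsFiniteMeasure μ] (hm : m ≤ mΩ) {V k : Ω → ℝ}
    (hV : StronglyMeasurable[m] V) {c : ℝ} (hVc : ∀ᵐ ω ∂μ, ‖V ω‖ ≤ c) (hk : Integrable k μ)
    (hs : MeasurableSet[m] s) :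
    ∫ ω in s, V ω * (μ[k|m]) ω ∂μ = ∫ ω in s, V ω * k ω ∂μ := by
  rw [← setIntegral_condExp hm (hk.bdd_mul (hV.mono hm).aestronglyMeasurable hVc) hs]
  exact setIntegral_congr_ae (hm s hs)
    ((condExp_stronglyMeasurable_mul_of_bound hm hV hk c hVc).mono fun ω hω _ => hω.symm)

lemma setIntegral_inter_eq_setIntegral_condExp_indicator_mul [IsFiniteMeasure μ]
    (hm : m ≤ mΩ) {k : Ω → ℝ} (hk : StronglyMeasurable[m] k) (hki : Integrable k μ)
    (ht : MeasurableSet t) (hs : MeasurableSet[m] s) :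
    ∫ ω in s ∩ t, k ω ∂μ = ∫ ω in s, (μ⟦t | m⟧) ω * k ω ∂μ := by
  have hind : t.indicator (fun _ => (1 : ℝ)) * k = t.indicator k := by
    ext ω; by_cases hω : ω ∈ t <;> simp [hω]
  have hint : Integrable (t.indicator (fun _ => (1 : ℝ)) * k) μ := hind ▸ hki.indicator ht
  rw [← setIntegral_indicator ht, ← hind, ← setIntegral_condExp hm hint hs]
  exact setIntegral_congr_ae (hm s hs) ((condExp_mul_of_stronglyMeasurable_right hk hint
    ((integrable_const 1).indicator ht)).mono fun ω hω _ => hω)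

lemma ae_norm_condExp_indicator_le_one : ∀ᵐ ω ∂μ, ‖(μ⟦t | m⟧) ω‖ ≤ 1 :=
  ae_bdd_norm_condExp_of_ae_bdd_norm (ae_of_all _ fun ω => by
    by_cases hω : ω ∈ t <;> simp [hω])

lemma setIntegral_eq_of_isPiSystem {E : Type*} [NormedAddCommGroup E] [NormedSpace ℝ E]
    {p : Set (Set Ω)} (h_eq : m = generateFrom p) (hp : IsPiSystem p) (hm : m ≤ mΩ)
    {f g : Ω → E} (hf : Integrable f μ) (hg : Integrable g μ)
    (h_univ : ∫ ω, f ω ∂μ = ∫ ω, g ω ∂μ) (basic : ∀ t ∈ p, ∫ ω in t, f ω ∂μ = ∫ ω in t, g ω ∂μ)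
    (ht : MeasurableSet[m] t) : ∫ ω in t, f ω ∂μ = ∫ ω in t, g ω ∂μ := by
  induction t, ht using MeasurableSpace.induction_on_inter h_eq hp with
  | empty => simp
  | basic t ht => exact basic t ht
  | compl t ht iht =>
    rw [setIntegral_compl (hm t ht) hf, setIntegral_compl (hm t ht) hg, iht, h_univ]
  | iUnion t hdisj ht iht =>
    rw [integral_iUnion (fun i => hm _ (ht i)) hdisj hf.integrableOn,
      integral_iUnion (fun i => hm _ (ht i)) hdisj hg.integrableOn]
    exact tsum_congr iht

lemma condExp_cond_ae_eq_of_forall_setIntegral_inter_eq (hm : m ≤ mΩ) {S : Set Ω}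
    {f g : Ω → ℝ} (hf : Integrable f μ[|S]) (hg : Integrable g μ[|S])
    (hfg : ∀ t, MeasurableSet[m] t → ∫ ω in t ∩ S, f ω ∂μ = ∫ ω in t ∩ S, g ω ∂μ) :
    μ[|S][f|m] =ᵐ[μ[|S]] μ[|S][g|m] := by
  have hcond : ∀ {k : Ω → ℝ} {t}, MeasurableSet t →
      ∫ ω in t, k ω ∂μ[|S] = (μ S)⁻¹.toReal • ∫ ω in t ∩ S, k ω ∂μ := fun ht => by
    rw [cond, Measure.restrict_smul, integral_smul_measure, Measure.restrict_restrict ht]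
  refine (ae_eq_condExp_of_forall_setIntegral_eq hm hf
    (fun _ _ _ => integrable_condExp.integrableOn) (fun t ht _ => ?_)
    stronglyMeasurable_condExp.aestronglyMeasurable).symm
  rw [setIntegral_condExp hm hg ht, hcond (hm t ht), hcond (hm t ht), hfg t ht]

section CondIndepFun

variable [StandardBorelSpace Ω] [IsFiniteMeasure μ] {hm : m ≤ mΩ} {β : Type*}
  [MeasurableSpace β] {g : Ω → β} {h : Ω → ℝ} {T : Set β}

lemma CondIndepFun.measureReal_inter_preimage_inter_preimage (hind : CondIndepFun m hm g h μ)
    (hg : Measurable g) (hh : Measurable h) (hT : MeasurableSet T) {B : Set ℝ}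
    (hB : MeasurableSet B) (hs : MeasurableSet[m] s) :
    μ.real (s ∩ g ⁻¹' T ∩ h ⁻¹' B) = ∫ ω in s ∩ h ⁻¹' B, (μ⟦g ⁻¹' T | m⟧) ω ∂μ := by
  have hgT := hg hT
  have hhB := hh hB
  calc μ.real (s ∩ g ⁻¹' T ∩ h ⁻¹' B)
      = ∫ ω in s, (μ⟦g ⁻¹' T ∩ h ⁻¹' B | m⟧) ω ∂μ := by
        rw [setIntegral_condExp hm ((integrable_const 1).indicator (hgT.inter hhB)) hs,
          setIntegral_indicator (hgT.inter hhB), setIntegral_const, smul_eq_mul, mul_one,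
          Set.inter_assoc]
    _ = ∫ ω in s, (μ⟦h ⁻¹' B | m⟧) ω * (μ⟦g ⁻¹' T | m⟧) ω ∂μ := by
        refine setIntegral_congr_ae (hm s hs) ?_
        filter_upwards [(condIndepFun_iff_condExp_inter_preimage_eq_mul hg hh).mp hind T B hT hB]
          with ω hω _
        rw [hω, mul_comm]
    _ = ∫ ω in s ∩ h ⁻¹' B, (μ⟦g ⁻¹' T | m⟧) ω ∂μ :=
        (setIntegral_inter_eq_setIntegral_condExp_indicator_mul hm stronglyMeasurable_condExp
          integrable_condExp hhB hs).symm

lemma CondIndepFun.setIntegral_inter_preimage_eq_setIntegral_condExp_indicator_mul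
    (hind : CondIndepFun m hm g h μ) (hg : Measurable g) (hh : Measurable h)
    (hT : MeasurableSet T) (hs : MeasurableSet[m] s) :
    ∫ ω in s ∩ g ⁻¹' T, h ω ∂μ = ∫ ω in s, (μ⟦g ⁻¹' T | m⟧) ω * h ω ∂μ := by
  set P := μ⟦g ⁻¹' T | m⟧
  have hPm : Measurable P := (stronglyMeasurable_condExp.mono hm).measurable
  have hP0 : 0 ≤ᵐ[μ] P :=
    condExp_nonneg (ae_of_all _ fun ω => Set.indicator_nonneg (fun _ _ => zero_le_one) ω)
  set ν := (μ.restrict s).withDensity fun ω => ENNReal.ofReal (P ω)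
  -- `h` has the same law under `μ` restricted to `s ∩ g ⁻¹' T` as under `P • μ` restricted to `s`
  have hmap : (μ.restrict (s ∩ g ⁻¹' T)).map h = ν.map h := by
    ext B hB
    rw [Measure.map_apply hh hB, Measure.map_apply hh hB, Measure.restrict_apply (hh hB),
      withDensity_apply _ (hh hB), Measure.restrict_restrict (hh hB),
      ← ofReal_integral_eq_lintegral_ofReal integrable_condExp.integrableOn
        (ae_restrict_of_ae hP0), ← ofReal_measureReal, Set.inter_comm, Set.inter_comm _ s,
      hind.measureReal_inter_preimage_inter_preimage hg hh hT hB hs]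
  calc ∫ ω in s ∩ g ⁻¹' T, h ω ∂μ
      = ∫ y, y ∂(μ.restrict (s ∩ g ⁻¹' T)).map h :=
        (integral_map hh.aemeasurable aestronglyMeasurable_id).symm
    _ = ∫ ω, h ω ∂ν := by
        rw [hmap]; exact integral_map hh.aemeasurable aestronglyMeasurable_id
    _ = ∫ ω in s, (ENNReal.ofReal (P ω)).toReal • h ω ∂μ :=
        integral_withDensity_eq_integral_toReal_smul (ENNReal.measurable_ofReal.comp hPm)
          (ae_of_all _ fun _ => ENNReal.ofReal_lt_top) _
    _ = ∫ ω in s, P ω * h ω ∂μ :=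
        setIntegral_congr_ae (hm s hs) (hP0.mono fun ω hω _ => by
          rw [ENNReal.toReal_ofReal hω, smul_eq_mul])

lemma CondIndepFun.setIntegral_inter_preimage_condExp (hind : CondIndepFun m hm g h μ)
    (hg : Measurable g) (hh : Measurable h) (hhi : Integrable h μ) (hT : MeasurableSet T)
    (hs : MeasurableSet[m] s) :
    ∫ ω in s ∩ g ⁻¹' T, (μ[h|m]) ω ∂μ = ∫ ω in s ∩ g ⁻¹' T, h ω ∂μ := by
  rw [hind.setIntegral_inter_preimage_eq_setIntegral_condExp_indicator_mul hg hh hT hs,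
    setIntegral_inter_eq_setIntegral_condExp_indicator_mul hm stronglyMeasurable_condExp
      integrable_condExp (hg hT) hs]
  exact setIntegral_mul_condExp_of_bound hm stronglyMeasurable_condExp
    ae_norm_condExp_indicator_le_one hhi hs

end CondIndepFun

lemma CondIndepFun.condExp_comap_prodMk_ae_eq [StandardBorelSpace Ω] [IsFiniteMeasure μ]
    {γ β : Type*} [mγ : MeasurableSpace γ] [mβ : MeasurableSpace β] {X : Ω → γ} {Z : Ω → β}
    {h : Ω → ℝ} (hX : Measurable X) (hZ : Measurable Z) (hh : Measurable h)
    (hhi : Integrable h μ) (hind : CondIndepFun (mγ.comap X) hX.comap_le Z h μ) :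
    μ[h | (mγ.prod mβ).comap fun ω => (X ω, Z ω)] =ᵐ[μ] μ[h | mγ.comap X] := by
  have hle : mγ.comap X ≤ (mγ.prod mβ).comap fun ω => (X ω, Z ω) := by
    rw [comap_prodMk]; exact le_sup_left
  refine (ae_eq_condExp_of_forall_setIntegral_eq (hX.prodMk hZ).comap_le hhi
    (fun _ _ _ => integrable_condExp.integrableOn) (fun t ht _ => ?_)
    (stronglyMeasurable_condExp.mono hle).aestronglyMeasurable).symm
  refine setIntegral_eq_of_isPiSystem (by rw [← generateFrom_prod, comap_generateFrom]; rfl)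
    (isPiSystem_prod.comap _) (hX.prodMk hZ).comap_le integrable_condExp hhi
    (integral_condExp hX.comap_le) ?_ ht
  rintro _ ⟨_, ⟨C, hC, B, hB, rfl⟩, rfl⟩
  exact hind.setIntegral_inter_preimage_condExp hZ hh hhi hB ⟨C, hC, rfl⟩

end ProbabilityTheory

theorem ccb_iv_standard_identification_general
    {Ω : Type*} [mΩ : MeasurableSpace Ω] [StandardBorelSpace Ω]
    {𝒰 𝒳 𝒜 𝒵 : Type*} [MeasurableSpace 𝒰] [MeasurableSpace 𝒳]
    [MeasurableSpace 𝒜] [MeasurableSpace 𝒵]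
    (μ : Measure Ω) [IsProbabilityMeasure μ]
    (U : Ω → 𝒰) (X : Ω → 𝒳) (A : Ω → 𝒜) (Y : Ω → ℝ) (Z : Ω → 𝒵) (RZ : Ω → Bool)
    (hX : Measurable X) (hA : Measurable A)
    (hZ : Measurable Z) (hRZ : Measurable RZ)
    -- (i) structured reward : Y = f (A, X) + ε with ε ⫫ A | (X, U)
    (f : 𝒜 × 𝒳 → ℝ) (hf : Measurable f) (Cf : ℝ) (hfbdd : ∀ p, |f p| ≤ Cf)
    (ε : Ω → ℝ) (hε : Measurable ε) (Cε : ℝ) (hεbdd : ∀ ω, |ε ω| ≤ Cε)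
    (hreward : ∀ ω, Y ω = f (A ω, X ω) + ε ω)
    -- (ii) IV independence : Z ⫫ (U, ε) | X
    (hIVindep : CondIndepFun (MeasurableSpace.comap X inferInstance) hX.comap_le
      Z (fun ω => (U ω, ε ω)) μ)
    -- (iv) missingness structure : RZ ⫫ (U, A, ε) | (X, Z)
    (hRZmiss : CondIndepFun (MeasurableSpace.comap (fun ω => (X ω, Z ω)) inferInstance)
      ((hX.prodMk hZ).comap_le) RZ (fun ω => (U ω, A ω, ε ω)) μ)
    -- the CATE : g* (x, a) = f (a, x) + e x with e a bounded measurable version of E[ε | X = x]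
    (e : 𝒳 → ℝ) (he : Measurable e) (Ce : ℝ) (hebdd : ∀ x, |e x| ≤ Ce)
    (hever : (fun ω => e (X ω)) =ᵐ[μ] μ[ε | MeasurableSpace.comap X inferInstance]) :
    (μ[|{ω | RZ ω = true}])[Y | MeasurableSpace.comap Z inferInstance]
      =ᵐ[μ[|{ω | RZ ω = true}]]
    (μ[|{ω | RZ ω = true}])[(fun ω => f (A ω, X ω) + e (X ω)) |
      MeasurableSpace.comap Z inferInstance] := by
  have integrable_of_bound : ∀ {ν : Measure Ω} [IsFiniteMeasure ν] {k : Ω → ℝ} {C : ℝ},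
      Measurable k → (∀ ω, |k ω| ≤ C) → Integrable k ν := fun hk hkC =>
    .of_bound hk.aestronglyMeasurable _ (ae_of_all _ hkC)
  have hRZε : CondIndepFun (MeasurableSpace.comap (fun ω => (X ω, Z ω)) inferInstance)
      (hX.prodMk hZ).comap_le RZ ε μ :=
    hRZmiss.comp measurable_id (measurable_snd.comp measurable_snd)
  have hεXZ : μ[ε | MeasurableSpace.comap (fun ω => (X ω, Z ω)) inferInstance]
      =ᵐ[μ] fun ω => e (X ω) :=
    ((hIVindep.comp measurable_id measurable_snd).condExp_comap_prodMk_ae_eq hX hZ hε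
      (integrable_of_bound hε hεbdd)).trans hever.symm
  have hεS : (μ[|{ω | RZ ω = true}])[ε | MeasurableSpace.comap Z inferInstance]
      =ᵐ[μ[|{ω | RZ ω = true}]]
      (μ[|{ω | RZ ω = true}])[fun ω => e (X ω) | MeasurableSpace.comap Z inferInstance] := by
    refine condExp_cond_ae_eq_of_forall_setIntegral_inter_eq hZ.comap_le
      (integrable_of_bound hε hεbdd) (integrable_of_bound (he.comp hX) fun ω => hebdd (X ω)) ?_
    rintro _ ⟨B, hB, rfl⟩
    change ∫ ω in Z ⁻¹' B ∩ RZ ⁻¹' {true}, ε ω ∂μ = ∫ ω in Z ⁻¹' B ∩ RZ ⁻¹' {true}, e (X ω) ∂μ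
    rw [← hRZε.setIntegral_inter_preimage_condExp (s := Z ⁻¹' B) hRZ hε
      (integrable_of_bound hε hεbdd) (measurableSet_singleton true)
      ⟨Prod.snd ⁻¹' B, measurable_snd hB, rfl⟩]
    exact setIntegral_congr_ae ((hZ hB).inter (hRZ (measurableSet_singleton true)))
      (hεXZ.mono fun ω hω _ => hω)
  have hFi : Integrable (fun ω => f (A ω, X ω)) μ[|{ω | RZ ω = true}] :=
    integrable_of_bound (hf.comp (hA.prodMk hX)) fun ω => hfbdd _
  rw [funext hreward]
  exact (condExp_add hFi (integrable_of_bound hε hεbdd) _).trans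
    (((Filter.EventuallyEq.refl _ _).add hεS).trans
      (condExp_add hFi (integrable_of_bound (he.comp hX) fun ω => hebdd (X ω)) _).symm)

/-- Identification identity in CCB-IV without completeness.
Under CCB-IV assumptions (i), (ii) and (iv), one has
`E[Y | Z ; R_Z = 1] = E[g*(A, X) | Z ; R_Z = 1]` almost surely, where
`g*(x, a) = f (a, x) + e x` is the CATE. -/
theorem ccb_iv_standard_identification
    {Ω : Type*} [mΩ : MeasurableSpace Ω] [StandardBorelSpace Ω] [Nonempty Ω]
    {𝒰 𝒳 𝒜 𝒵 : Type*} [MeasurableSpace 𝒰] [MeasurableSpace 𝒳]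
    [MeasurableSpace 𝒜] [MeasurableSpace 𝒵]
    (μ : Measure Ω) [IsProbabilityMeasure μ]
    (U : Ω → 𝒰) (X : Ω → 𝒳) (A : Ω → 𝒜) (Y : Ω → ℝ) (Z : Ω → 𝒵) (RX RZ : Ω → Bool)
    (hU : Measurable U) (hX : Measurable X) (hA : Measurable A) (hY : Measurable Y)
    (hZ : Measurable Z) (hRX : Measurable RX) (hRZ : Measurable RZ)
    -- positive probability of the conditioning events
    (hSZpos : μ {ω | RZ ω = true} ≠ 0)
    (hSXZpos : μ ({ω | RX ω = true} ∩ {ω | RZ ω = true}) ≠ 0)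
    -- (i) structured reward : Y = f (A, X) + ε with ε ⫫ A | (X, U)
    (f : 𝒜 × 𝒳 → ℝ) (hf : Measurable f) (Cf : ℝ) (hfbdd : ∀ p, |f p| ≤ Cf)
    (ε : Ω → ℝ) (hε : Measurable ε) (Cε : ℝ) (hεbdd : ∀ ω, |ε ω| ≤ Cε)
    (hreward : ∀ ω, Y ω = f (A ω, X ω) + ε ω)
    (hεA : CondIndepFun (MeasurableSpace.comap (fun ω => (X ω, U ω)) inferInstance)
      ((hX.prodMk hU).comap_le) ε A μ)
    -- (ii) IV independence : Z ⫫ (U, ε) | X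
    (hIVindep : CondIndepFun (MeasurableSpace.comap X inferInstance) hX.comap_le
      Z (fun ω => (U ω, ε ω)) μ)
    -- (iv) missingness structure : RZ ⫫ (U, A, ε) | (X, Z)
    (hRZmiss : CondIndepFun (MeasurableSpace.comap (fun ω => (X ω, Z ω)) inferInstance)
      ((hX.prodMk hZ).comap_le) RZ (fun ω => (U ω, A ω, ε ω)) μ)
    -- the CATE : g* (x, a) = f (a, x) + e x with e a bounded measurable version of E[ε | X = x]
    (e : 𝒳 → ℝ) (he : Measurable e) (Ce : ℝ) (hebdd : ∀ x, |e x| ≤ Ce)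
    (hever : (fun ω => e (X ω)) =ᵐ[μ] μ[ε | MeasurableSpace.comap X inferInstance]) :
    (μ[|{ω | RZ ω = true}])[Y | MeasurableSpace.comap Z inferInstance]
      =ᵐ[μ[|{ω | RZ ω = true}]]
    (μ[|{ω | RZ ω = true}])[(fun ω => f (A ω, X ω) + e (X ω)) |
      MeasurableSpace.comap Z inferInstance] :=
  ccb_iv_standard_identification_general (mΩ := mΩ) μ U X A Y Z RZ hX hA hZ hRZ f hf Cf hfbdd ε hε
    Cε hεbdd hreward hIVindep hRZmiss e he Ce hebdd hever
end

section
/- Suppose the action set 𝒜 is finite, Y = f(A, X) + ε with f bounded measurable and ε bounded, ε is conditionally independent of A given (X, U), and P(A = a | U, X) > 0 almost surely for each a ∈ 𝒜. Let m : 𝒰 × 𝒳 × 𝒜 → ℝ be any measurable function with m(U, X, A) = E[Y | U, X, A] almost surely. Then for every a ∈ 𝒜, E[m(U, X, a) | X] = f(a, X) + E[ε | X] almost surely; that is, the do-intervention mean E[E[Y | U, X, A = a] | X = x] equals the CATE g*(x, a) = f(a, x) + E[ε | X = x]. -/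
/-!
Conditional independence of `ε` and `A` given `(X, U)` gives `E[ε | X, U, A] = E[ε | X, U]`,
hence `E[Y | U, X, A] = f (A, X) + E[ε | X, U]`. Thus `m (U, X, a)` and `f (a, X) + E[ε | X, U]`
are two functions of `(X, U)` that agree on `{A = a}`; since `P(A = a | X, U) > 0`, they agree
almost surely. Conditioning on `X` and using the tower property gives the claim.
-/

open MeasureTheory ProbabilityTheory MeasurableSpace

theorem MeasurableEmbedding.comap_comp {Ω α β : Type*} [MeasurableSpace α] [MeasurableSpace β]
    {e : α → β} (he : MeasurableEmbedding e) (f : Ω → α) :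
    MeasurableSpace.comap (e ∘ f) inferInstance = MeasurableSpace.comap f inferInstance := by
  rw [← MeasurableSpace.comap_comp, he.comap_eq]

namespace MeasureTheory

variable {Ω : Type*} {m mΩ : MeasurableSpace Ω} {μ : Measure Ω}

theorem condExp_add_of_stronglyMeasurable_left {E : Type*} [NormedAddCommGroup E]
    [NormedSpace ℝ E] [CompleteSpace E] (hm : m ≤ mΩ) [SigmaFinite (μ.trim hm)] {f g : Ω → E}
    (hf : StronglyMeasurable[m] f) (hfi : Integrable f μ) (hgi : Integrable g μ) :
    μ[f + g | m] =ᵐ[μ] f + μ[g | m] := by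
  simpa only [condExp_of_stronglyMeasurable hm hf hfi] using condExp_add hfi hgi m

/-- On the `m`-measurable set `N` where `g ≠ h`, `∫_N P(s | m) = μ (N ∩ s) = 0` with a positive
integrand, so `μ N = 0`. -/
theorem ae_eq_of_ae_eq_on_of_condExp_indicator_pos [IsFiniteMeasure μ] (hm : m ≤ mΩ)
    {g h : Ω → ℝ} (hg : StronglyMeasurable[m] g) (hh : StronglyMeasurable[m] h) {s : Set Ω}
    (hs : MeasurableSet s) (hgh : ∀ᵐ ω ∂μ, ω ∈ s → g ω = h ω)
    (hpos : ∀ᵐ ω ∂μ, 0 < μ[s.indicator (fun _ ↦ (1 : ℝ)) | m] ω) :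
    g =ᵐ[μ] h := by
  set N : Set Ω := {ω | g ω ≠ h ω}
  have hN : MeasurableSet[m] N := (measurableSet_eq_fun hg.measurable hh.measurable).compl
  have hNs : μ (N ∩ s) = 0 := by
    refine measure_mono_null ?_ (ae_iff.1 hgh)
    rintro ω ⟨hωN, hωs⟩ hω
    exact hωN (hω hωs)
  have hint : ∫ ω in N, μ[s.indicator (fun _ ↦ (1 : ℝ)) | m] ω ∂μ = 0 := by
    rw [setIntegral_condExp hm ((integrable_const 1).indicator hs) hN,
      setIntegral_indicator hs, setIntegral_const, measureReal_def, hNs]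
    simp
  have hzero := (setIntegral_eq_zero_iff_of_nonneg_ae
    (ae_restrict_of_ae (condExp_nonneg (ae_of_all _ (Set.indicator_nonneg fun _ _ ↦ zero_le_one))))
    integrable_condExp.integrableOn).1 hint
  have hfalse : ∀ᵐ ω ∂μ.restrict N, False := by
    filter_upwards [hzero, ae_restrict_of_ae hpos] with ω h₀ hω using hω.ne' h₀
  filter_upwards [(ae_restrict_iff' (hm _ hN)).1 hfalse] with ω hω
  exact not_not.1 hω

end MeasureTheory

namespace ProbabilityTheory

variable {Ω β β' : Type*} {m' mΩ : MeasurableSpace Ω} [StandardBorelSpace Ω] {hm' : m' ≤ mΩ}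
  {μ : Measure Ω} [IsFiniteMeasure μ]

theorem CondIndepFun.ae_indepFun_condExpKernel {mβ : MeasurableSpace β}
    {mβ' : MeasurableSpace β'} [CountableOrCountablyGenerated Ω (β × β')] {f : Ω → β}
    {g : Ω → β'} (hfg : CondIndepFun m' hm' f g μ) (hf : Measurable f) (hg : Measurable g) :
    ∀ᵐ ω ∂μ, f ⟂ᵢ[condExpKernel μ m' ω] g := by
  filter_upwards [ae_of_ae_trim hm' ((condIndepFun_iff_map_prod_eq_prod_map_map hf hg).1 hfg)]
    with ω hω
  rw [indepFun_iff_map_prod_eq_prod_map_map hf.aemeasurable hg.aemeasurable]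
  simpa only [Kernel.map_apply _ (hf.prodMk hg), Kernel.prod_apply, Kernel.map_apply _ hf,
    Kernel.map_apply _ hg] using hω

theorem CondIndepFun.condExp_mul_ae_eq {f g : Ω → ℝ} (hfg : CondIndepFun m' hm' f g μ)
    (hf : Measurable f) (hg : Measurable g) (hfi : Integrable f μ) (hgi : Integrable g μ)
    (hfgi : Integrable (f * g) μ) :
    μ[f * g | m'] =ᵐ[μ] μ[f | m'] * μ[g | m'] := by
  filter_upwards [condExp_ae_eq_integral_condExpKernel hm' hfgi,
    condExp_ae_eq_integral_condExpKernel hm' hfi, condExp_ae_eq_integral_condExpKernel hm' hgi,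
    hfg.ae_indepFun_condExpKernel hf hg] with ω hfgω hfω hgω hω
  rw [hfgω, Pi.mul_apply, hfω, hgω]
  exact hω.integral_mul_eq_mul_integral hf.aestronglyMeasurable hg.aestronglyMeasurable

theorem CondIndepFun.setIntegral_inter_preimage_condExp_s3 [MeasurableSpace β'] {f : Ω → ℝ}
    {g : Ω → β'} (hfg : CondIndepFun m' hm' f g μ) (hf : Measurable f) (hg : Measurable g)
    (hfi : Integrable f μ) {T : Set Ω} (hT : MeasurableSet[m'] T) {t : Set β'}
    (ht : MeasurableSet t) :
    ∫ ω in T ∩ g ⁻¹' t, μ[f | m'] ω ∂μ = ∫ ω in T ∩ g ⁻¹' t, f ω ∂μ := by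
  have hs : MeasurableSet (g ⁻¹' t) := hg ht
  set ind : Ω → ℝ := (g ⁻¹' t).indicator 1
  have hmul_ind : ∀ h : Ω → ℝ, h * ind = (g ⁻¹' t).indicator h := fun h ↦ by
    ext ω; by_cases hω : ω ∈ g ⁻¹' t <;> simp [ind, hω]
  have hind : Measurable ind := measurable_one.indicator hs
  have hindi : Integrable ind μ := (integrable_const 1).indicator hs
  have hmuli : ∀ {h : Ω → ℝ}, Integrable h μ → Integrable (h * ind) μ :=
    fun hh ↦ (hmul_ind _).symm ▸ hh.indicator hs
  have hfind : CondIndepFun m' hm' f ind μ :=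
    hfg.comp (φ := id) (ψ := t.indicator 1) measurable_id (measurable_one.indicator ht)
  calc ∫ ω in T ∩ g ⁻¹' t, μ[f | m'] ω ∂μ
      = ∫ ω in T, μ[μ[f | m'] * ind | m'] ω ∂μ := by
        rw [setIntegral_condExp hm' (hmuli integrable_condExp) hT, hmul_ind,
          setIntegral_indicator hs]
    _ = ∫ ω in T, μ[f * ind | m'] ω ∂μ := by
        refine setIntegral_congr_ae (hm' _ hT) ?_
        filter_upwards [condExp_mul_of_stronglyMeasurable_left stronglyMeasurable_condExp
            (hmuli integrable_condExp) hindi,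
          hfind.condExp_mul_ae_eq hf hind hfi hindi (hmuli hfi)] with ω h₁ h₂ _
        rw [h₁, h₂]
    _ = ∫ ω in T ∩ g ⁻¹' t, f ω ∂μ := by
        rw [setIntegral_condExp hm' (hmuli hfi) hT, hmul_ind, setIntegral_indicator hs]

variable {𝒲 𝒜 : Type*} [MeasurableSpace 𝒲] [MeasurableSpace 𝒜] [Countable 𝒜]
  [MeasurableSingletonClass 𝒜] {W : Ω → 𝒲} {A : Ω → 𝒜} {ε : Ω → ℝ}

theorem CondIndepFun.condExp_comap_prodMk_ae_eq_s3 (hW : Measurable W)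
    (hεA : CondIndepFun (MeasurableSpace.comap W inferInstance) hW.comap_le ε A μ)
    (hA : Measurable A) (hε : Measurable ε) (hεi : Integrable ε μ) :
    μ[ε | MeasurableSpace.comap (fun ω ↦ (W ω, A ω)) inferInstance]
      =ᵐ[μ] μ[ε | MeasurableSpace.comap W inferInstance] := by
  have hle : MeasurableSpace.comap W inferInstance
      ≤ MeasurableSpace.comap (fun ω ↦ (W ω, A ω)) inferInstance :=
    (measurable_fst.comp (comap_measurable (fun ω ↦ (W ω, A ω)))).comap_le
  refine (ae_eq_condExp_of_forall_setIntegral_eq (hW.prodMk hA).comap_le hεi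
    (fun _ _ _ ↦ integrable_condExp.integrableOn) ?_
    (stronglyMeasurable_condExp.mono hle).aestronglyMeasurable).symm
  rintro _ ⟨B, hB, rfl⟩ -
  set T : 𝒜 → Set Ω := fun b ↦ W ⁻¹' {w | (w, b) ∈ B}
  have hT : ∀ b, MeasurableSet[MeasurableSpace.comap W inferInstance] (T b) :=
    fun b ↦ ⟨_, measurable_prodMk_right hB, rfl⟩
  have hdecomp : (fun ω ↦ (W ω, A ω)) ⁻¹' B = ⋃ b, T b ∩ A ⁻¹' {b} := by
    ext ω; simp [T]
  have hmeas : ∀ b, MeasurableSet (T b ∩ A ⁻¹' {b}) :=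
    fun b ↦ (hW.comap_le _ (hT b)).inter (hA (measurableSet_singleton b))
  have hdisj : Pairwise (Function.onFun Disjoint fun b ↦ T b ∩ A ⁻¹' {b}) :=
    fun b b' hbb' ↦ Set.disjoint_left.2 fun ω hω hω' ↦ hbb' (hω.2.symm.trans hω'.2)
  rw [hdecomp, integral_iUnion hmeas hdisj integrable_condExp.integrableOn,
    integral_iUnion hmeas hdisj hεi.integrableOn]
  exact tsum_congr fun b ↦
    hεA.setIntegral_inter_preimage_condExp_s3 hε hA hεi (hT b) (measurableSet_singleton b)

theorem CondIndepFun.apply_prodMk_const_ae_eq_add_condExp (hW : Measurable W)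
    (hεA : CondIndepFun (MeasurableSpace.comap W inferInstance) hW.comap_le ε A μ)
    (hA : Measurable A) (hε : Measurable ε) (hεi : Integrable ε μ) {φ ψ : 𝒲 × 𝒜 → ℝ}
    (hφ : Measurable φ) (hφi : Integrable (fun ω ↦ φ (W ω, A ω)) μ) (hψ : Measurable ψ)
    (hψφ : (fun ω ↦ ψ (W ω, A ω)) =ᵐ[μ]
      μ[(fun ω ↦ φ (W ω, A ω)) + ε | MeasurableSpace.comap (fun ω ↦ (W ω, A ω)) inferInstance])
    {a : 𝒜} (hpos : ∀ᵐ ω ∂μ,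
      0 < μ[{ω | A ω = a}.indicator (fun _ ↦ (1 : ℝ)) | MeasurableSpace.comap W inferInstance] ω) :
    (fun ω ↦ ψ (W ω, a))
      =ᵐ[μ] (fun ω ↦ φ (W ω, a)) + μ[ε | MeasurableSpace.comap W inferInstance] := by
  have hψA : ∀ᵐ ω ∂μ,
      ψ (W ω, A ω) = φ (W ω, A ω) + μ[ε | MeasurableSpace.comap W inferInstance] ω :=
    hψφ.trans <| (condExp_add_of_stronglyMeasurable_left (f := fun ω ↦ φ (W ω, A ω))
      (hW.prodMk hA).comap_le (hφ.comp (comap_measurable _)).stronglyMeasurable hφi hεi).trans <|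
        (Filter.EventuallyEq.refl _ _).add (hεA.condExp_comap_prodMk_ae_eq_s3 hW hA hε hεi)
  have hmeas : ∀ {χ : 𝒲 × 𝒜 → ℝ}, Measurable χ →
      StronglyMeasurable[MeasurableSpace.comap W inferInstance] (fun ω ↦ χ (W ω, a)) :=
    fun hχ ↦ ((hχ.comp measurable_prodMk_right).comp (comap_measurable W)).stronglyMeasurable
  refine ae_eq_of_ae_eq_on_of_condExp_indicator_pos hW.comap_le (hmeas hψ)
    ((hmeas hφ).add stronglyMeasurable_condExp) (hA (measurableSet_singleton a)) ?_ hpos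
  filter_upwards [hψA] with ω hω (hωa : A ω = a)
  rwa [hωa] at hω

end ProbabilityTheory

theorem do_intervention_mean_eq_cate_general
    {Ω : Type*} [mΩ : MeasurableSpace Ω] [StandardBorelSpace Ω]
    {𝒰 𝒳 𝒜 : Type*} [MeasurableSpace 𝒰] [MeasurableSpace 𝒳]
    [Fintype 𝒜] [MeasurableSpace 𝒜] [MeasurableSingletonClass 𝒜]
    (μ : Measure Ω) [IsProbabilityMeasure μ]
    (U : Ω → 𝒰) (X : Ω → 𝒳) (A : Ω → 𝒜) (Y : Ω → ℝ) (ε : Ω → ℝ)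
    (hU : Measurable U) (hX : Measurable X) (hA : Measurable A)
    (hε : Measurable ε)
    -- structured reward : Y = f (A, X) + ε with f bounded measurable and ε bounded
    (f : 𝒜 × 𝒳 → ℝ) (hf : Measurable f) (Cf : ℝ) (hfbdd : ∀ p, |f p| ≤ Cf)
    (Cε : ℝ) (hεbdd : ∀ ω, |ε ω| ≤ Cε)
    (hreward : ∀ ω, Y ω = f (A ω, X ω) + ε ω)
    -- ε ⫫ A | (X, U)
    (hεA : CondIndepFun (MeasurableSpace.comap (fun ω => (X ω, U ω)) inferInstance)
      ((hX.prodMk hU).comap_le) ε A μ)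
    -- overlap : P(A = a | U, X) > 0 almost surely, for every a
    (hoverlap : ∀ a : 𝒜, ∀ᵐ ω ∂μ,
      0 < (μ[({ω' | A ω' = a}).indicator (fun _ => (1 : ℝ)) |
        MeasurableSpace.comap (fun ω => (U ω, X ω)) inferInstance]) ω)
    -- m : measurable version of E[Y | U, X, A]
    (m : 𝒰 × 𝒳 × 𝒜 → ℝ) (hm : Measurable m)
    (hmver : (fun ω => m (U ω, X ω, A ω)) =ᵐ[μ]
      μ[Y | MeasurableSpace.comap (fun ω => (U ω, X ω, A ω)) inferInstance]) :
    ∀ a : 𝒜,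
      μ[(fun ω => m (U ω, X ω, a)) | MeasurableSpace.comap X inferInstance]
        =ᵐ[μ]
      (fun ω => f (a, X ω) + (μ[ε | MeasurableSpace.comap X inferInstance]) ω) := by
  intro a
  set W : Ω → 𝒳 × 𝒰 := fun ω ↦ (X ω, U ω)
  have hW : Measurable W := hX.prodMk hU
  have hUX : MeasurableSpace.comap (fun ω ↦ (U ω, X ω)) inferInstance
      = MeasurableSpace.comap W inferInstance :=
    MeasurableEquiv.prodComm.measurableEmbedding.comap_comp W
  have hUXA : MeasurableSpace.comap (fun ω ↦ (U ω, X ω, A ω)) inferInstance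
      = MeasurableSpace.comap (fun ω ↦ (W ω, A ω)) inferInstance :=
    ((MeasurableEquiv.prodComm.prodCongr (MeasurableEquiv.refl 𝒜)).trans
      MeasurableEquiv.prodAssoc).measurableEmbedding.comap_comp fun ω ↦ (W ω, A ω)
  have hεi : Integrable ε μ := .of_bound hε.aestronglyMeasurable Cε (ae_of_all _ hεbdd)
  have hfi : ∀ {B : Ω → 𝒜}, Measurable B → Integrable (fun ω ↦ f (B ω, X ω)) μ :=
    fun hB ↦ .of_bound (hf.comp (hB.prodMk hX)).aestronglyMeasurable Cf
      (ae_of_all _ fun _ ↦ hfbdd _)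
  have hmver' : (fun ω ↦ m (U ω, X ω, A ω)) =ᵐ[μ] μ[(fun ω ↦ f (A ω, X ω)) + ε |
      MeasurableSpace.comap (fun ω ↦ (W ω, A ω)) inferInstance] := by
    rwa [← hUXA, show (fun ω ↦ f (A ω, X ω)) + ε = Y from (funext hreward).symm]
  have hma := hεA.apply_prodMk_const_ae_eq_add_condExp hW hA hε hεi
    (φ := fun p ↦ f (p.2, p.1.1)) (ψ := fun p ↦ m (p.1.2, p.1.1, p.2)) (by fun_prop) (hfi hA)
    (by fun_prop) hmver' (hUX ▸ hoverlap a)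
  exact (condExp_congr_ae hma).trans <|
    (condExp_add_of_stronglyMeasurable_left hX.comap_le
      ((hf.comp measurable_prodMk_left).comp (comap_measurable X)).stronglyMeasurable
      (hfi measurable_const) integrable_condExp).trans <|
    (Filter.EventuallyEq.refl _ _).add
      (condExp_condExp_of_le (measurable_fst.comp (comap_measurable W)).comap_le hW.comap_le)

/-- The do-intervention mean equals the CATE under structured rewards.
If `Y = f (A, X) + ε`, `ε ⫫ A | (X, U)`, and overlap holds, then for any measurable version
`m` of `E[Y | U, X, A]` and every action `a`,
`E[m (U, X, a) | X] = f (a, X) + E[ε | X]` almost surely. -/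
theorem do_intervention_mean_eq_cate
    {Ω : Type*} [mΩ : MeasurableSpace Ω] [StandardBorelSpace Ω] [Nonempty Ω]
    {𝒰 𝒳 𝒜 : Type*} [MeasurableSpace 𝒰] [MeasurableSpace 𝒳]
    [Fintype 𝒜] [MeasurableSpace 𝒜] [MeasurableSingletonClass 𝒜]
    (μ : Measure Ω) [IsProbabilityMeasure μ]
    (U : Ω → 𝒰) (X : Ω → 𝒳) (A : Ω → 𝒜) (Y : Ω → ℝ) (ε : Ω → ℝ)
    (hU : Measurable U) (hX : Measurable X) (hA : Measurable A) (hY : Measurable Y)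
    (hε : Measurable ε)
    -- structured reward : Y = f (A, X) + ε with f bounded measurable and ε bounded
    (f : 𝒜 × 𝒳 → ℝ) (hf : Measurable f) (Cf : ℝ) (hfbdd : ∀ p, |f p| ≤ Cf)
    (Cε : ℝ) (hεbdd : ∀ ω, |ε ω| ≤ Cε)
    (hreward : ∀ ω, Y ω = f (A ω, X ω) + ε ω)
    -- ε ⫫ A | (X, U)
    (hεA : CondIndepFun (MeasurableSpace.comap (fun ω => (X ω, U ω)) inferInstance)
      ((hX.prodMk hU).comap_le) ε A μ)
    -- overlap : P(A = a | U, X) > 0 almost surely, for every a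
    (hoverlap : ∀ a : 𝒜, ∀ᵐ ω ∂μ,
      0 < (μ[({ω' | A ω' = a}).indicator (fun _ => (1 : ℝ)) |
        MeasurableSpace.comap (fun ω => (U ω, X ω)) inferInstance]) ω)
    -- m : measurable version of E[Y | U, X, A]
    (m : 𝒰 × 𝒳 × 𝒜 → ℝ) (hm : Measurable m)
    (hmver : (fun ω => m (U ω, X ω, A ω)) =ᵐ[μ]
      μ[Y | MeasurableSpace.comap (fun ω => (U ω, X ω, A ω)) inferInstance]) :
    ∀ a : 𝒜,
      μ[(fun ω => m (U ω, X ω, a)) | MeasurableSpace.comap X inferInstance]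
        =ᵐ[μ]
      (fun ω => f (a, X ω) + (μ[ε | MeasurableSpace.comap X inferInstance]) ω) :=
  do_intervention_mean_eq_cate_general (mΩ := mΩ) μ U X A Y ε hU hX hA hε f hf Cf hfbdd Cε hεbdd
    hreward hεA hoverlap m hm hmver
end

section
/- (Pessimistic policy optimization eliminates spurious correlation.) Let G and Π be nonempty sets, V : G × Π → ℝ a function bounded below on CI × Π, g* ∈ G (the true reward model), CI ⊆ G a nonempty subset (confidence set) with g_H ∈ CI, and π* ∈ Π. Suppose π̂ ∈ Π maximizes the pessimistic value: inf_{g∈CI} V(g, π̂) ≥ inf_{g∈CI} V(g, π) for every π ∈ Π. Then the suboptimality of π̂ satisfies V(g*, π*) − V(g*, π̂) ≤ ( V(g*, π*) − inf_{g∈CI} V(g, π*) ) + ( V(g_H, π̂) − V(g*, π̂) ). -/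
/-- Pessimistic policy optimization eliminates spurious correlation.
If `π̂` maximizes the pessimistic value `inf_{g∈CI} V(g, ·)` over policies, then
`V(g*, π*) − V(g*, π̂) ≤ (V(g*, π*) − inf_{g∈CI} V(g, π*)) + (V(g_H, π̂) − V(g*, π̂))`
whenever `g_H ∈ CI` and `V` is bounded below on `CI × Π`. -/
theorem pessimism_suboptimality_bound
    {G P : Type*} (V : G → P → ℝ)
    (CI : Set G) (hCIne : CI.Nonempty)
    (c : ℝ) (hbdd : ∀ g ∈ CI, ∀ π : P, c ≤ V g π)
    (gstar gH : G) (hgH : gH ∈ CI)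
    (πstar πhat : P)
    (hπhat : ∀ π : P, (⨅ g : CI, V g π) ≤ ⨅ g : CI, V g πhat) :
    V gstar πstar - V gstar πhat
      ≤ (V gstar πstar - ⨅ g : CI, V g πstar) + (V gH πhat - V gstar πhat) := by
  have h1 : (⨅ g : CI, V g πhat) ≤ V gH πhat := by
    apply ciInf_le _ (⟨gH, hgH⟩ : CI)
    exact ⟨c, fun x ⟨g, hg⟩ => hg ▸ hbdd g g.2 πhat⟩
  have h2 := hπhat πstar
  linarith
end

section
/- (Chain-rule factorization under outcome-independent missingness.) Let Y, A, Z, X be random variables with countable ranges on a probability space, and let R_X, R_Z be {0,1}-valued random variables such that R_X is conditionally independent of (Y, R_Z) given (A, Z, X). Fix values y, a, z with P(Z = z, R_Z = 1) > 0, and assume that P(R_X = 1 | X = x, A = a, Z = z, R_Z = 1) > 0 for each x with P(X = x, A = a, Z = z, R_Z = 1) > 0. Then P(Y = y, A = a | Z = z, R_Z = 1) = Σ_x P(Y = y | X = x, A = a, Z = z, R_X = 1, R_Z = 1) · P(X = x, A = a | Z = z, R_Z = 1), where the sum ranges over those x with P(X = x, A = a, Z = z, R_Z = 1) > 0. -/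
open MeasureTheory ProbabilityTheory ENNReal

/-- Chain-rule factorization under outcome-independent missingness.
For discrete random variables with `R_X` conditionally independent of `(Y, R_Z)` given
`(A, Z, X)`, one has
`P(Y = y, A = a | Z = z, R_Z = 1)
  = Σ_x P(Y = y | X = x, A = a, Z = z, R_X = 1, R_Z = 1) · P(X = x, A = a | Z = z, R_Z = 1)`,
the sum ranging over those `x` with `P(X = x, A = a, Z = z, R_Z = 1) > 0`, assuming
furthermore `P(R_X = 1 | X = x, A = a, Z = z, R_Z = 1) > 0` for each such `x`. -/
theorem chain_rule_outcome_independent_missingness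
    {Ω : Type*} [MeasurableSpace Ω] (μ : Measure Ω) [IsProbabilityMeasure μ]
    {𝒴 𝒜 𝒵 𝒳 : Type*} [Countable 𝒴] [Countable 𝒜] [Countable 𝒵] [Countable 𝒳]
    [MeasurableSpace 𝒴] [MeasurableSingletonClass 𝒴]
    [MeasurableSpace 𝒜] [MeasurableSingletonClass 𝒜]
    [MeasurableSpace 𝒵] [MeasurableSingletonClass 𝒵]
    [MeasurableSpace 𝒳] [MeasurableSingletonClass 𝒳]
    (Y : Ω → 𝒴) (A : Ω → 𝒜) (Z : Ω → 𝒵) (X : Ω → 𝒳) (RX RZ : Ω → Bool)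
    (hY : Measurable Y) (hA : Measurable A) (hZ : Measurable Z) (hX : Measurable X)
    (hRX : Measurable RX) (hRZ : Measurable RZ)
    -- R_X is conditionally independent of (Y, R_Z) given (A, Z, X), in elementary form
    (hCI : ∀ (r : Bool) (y' : 𝒴) (r' : Bool) (a' : 𝒜) (z' : 𝒵) (x' : 𝒳),
      μ {ω | A ω = a' ∧ Z ω = z' ∧ X ω = x'} ≠ 0 →
      μ[|{ω | A ω = a' ∧ Z ω = z' ∧ X ω = x'}]
          {ω | RX ω = r ∧ Y ω = y' ∧ RZ ω = r'}
        = μ[|{ω | A ω = a' ∧ Z ω = z' ∧ X ω = x'}] {ω | RX ω = r}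
          * μ[|{ω | A ω = a' ∧ Z ω = z' ∧ X ω = x'}] {ω | Y ω = y' ∧ RZ ω = r'})
    -- fixed values with positive probability of the conditioning event
    (y : 𝒴) (a : 𝒜) (z : 𝒵)
    (hz : μ {ω | Z ω = z ∧ RZ ω = true} ≠ 0)
    -- positivity of the missingness probability on the relevant cells
    (hpos : ∀ x : 𝒳, μ {ω | X ω = x ∧ A ω = a ∧ Z ω = z ∧ RZ ω = true} ≠ 0 →
      μ[|{ω | X ω = x ∧ A ω = a ∧ Z ω = z ∧ RZ ω = true}] {ω | RX ω = true} ≠ 0) :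
    μ[|{ω | Z ω = z ∧ RZ ω = true}] {ω | Y ω = y ∧ A ω = a}
      = ∑' x : {x : 𝒳 // μ {ω | X ω = x ∧ A ω = a ∧ Z ω = z ∧ RZ ω = true} ≠ 0},
          μ[|{ω | X ω = (x : 𝒳) ∧ A ω = a ∧ Z ω = z ∧ RX ω = true ∧ RZ ω = true}]
            {ω | Y ω = y}
          * μ[|{ω | Z ω = z ∧ RZ ω = true}] {ω | X ω = (x : 𝒳) ∧ A ω = a} := by
  classical
  have hE : MeasurableSet {ω | Z ω = z ∧ RZ ω = true} :=
    (hZ (measurableSet_singleton z)).inter (hRZ (measurableSet_singleton true))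
  have hEtop : μ {ω | Z ω = z ∧ RZ ω = true} ≠ ∞ := measure_ne_top μ _
  -- per-cell key identity
  have key : ∀ x : 𝒳, μ {ω | X ω = x ∧ A ω = a ∧ Z ω = z ∧ RZ ω = true} ≠ 0 →
      (μ {ω | Z ω = z ∧ RZ ω = true})⁻¹
          * μ ({ω | Z ω = z ∧ RZ ω = true} ∩ {ω | Y ω = y ∧ A ω = a ∧ X ω = x})
        = μ[|{ω | X ω = x ∧ A ω = a ∧ Z ω = z ∧ RX ω = true ∧ RZ ω = true}] {ω | Y ω = y}
          * μ[|{ω | Z ω = z ∧ RZ ω = true}] {ω | X ω = x ∧ A ω = a} := by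
    intro x hx
    have hCm : MeasurableSet {ω | A ω = a ∧ Z ω = z ∧ X ω = x} :=
      (hA (measurableSet_singleton a)).inter
        ((hZ (measurableSet_singleton z)).inter (hX (measurableSet_singleton x)))
    have hDm : MeasurableSet {ω | X ω = x ∧ A ω = a ∧ Z ω = z ∧ RZ ω = true} :=
      (hX (measurableSet_singleton x)).inter ((hA (measurableSet_singleton a)).inter
        ((hZ (measurableSet_singleton z)).inter (hRZ (measurableSet_singleton true))))
    have hFm : MeasurableSet {ω | X ω = x ∧ A ω = a ∧ Z ω = z ∧ RX ω = true ∧ RZ ω = true} :=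
      (hX (measurableSet_singleton x)).inter ((hA (measurableSet_singleton a)).inter
        ((hZ (measurableSet_singleton z)).inter
          ((hRX (measurableSet_singleton true)).inter (hRZ (measurableSet_singleton true)))))
    set C : Set Ω := {ω | A ω = a ∧ Z ω = z ∧ X ω = x} with hCdef
    -- basic set identities
    have hDC : {ω | X ω = x ∧ A ω = a ∧ Z ω = z ∧ RZ ω = true} = C ∩ {ω | RZ ω = true} := by
      ext ω; simp only [hCdef, Set.mem_inter_iff, Set.mem_setOf_eq]; tauto
    have hFC : {ω | X ω = x ∧ A ω = a ∧ Z ω = z ∧ RX ω = true ∧ RZ ω = true}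
        = C ∩ {ω | RX ω = true ∧ RZ ω = true} := by
      ext ω; simp only [hCdef, Set.mem_inter_iff, Set.mem_setOf_eq]; tauto
    have hFY : {ω | X ω = x ∧ A ω = a ∧ Z ω = z ∧ RX ω = true ∧ RZ ω = true} ∩ {ω | Y ω = y}
        = C ∩ {ω | RX ω = true ∧ Y ω = y ∧ RZ ω = true} := by
      ext ω; simp only [hCdef, Set.mem_inter_iff, Set.mem_setOf_eq]; tauto
    have hED : {ω | Z ω = z ∧ RZ ω = true} ∩ {ω | X ω = x ∧ A ω = a}
        = C ∩ {ω | RZ ω = true} := by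
      ext ω; simp only [hCdef, Set.mem_inter_iff, Set.mem_setOf_eq]; tauto
    have hEY : {ω | Z ω = z ∧ RZ ω = true} ∩ {ω | Y ω = y ∧ A ω = a ∧ X ω = x}
        = C ∩ {ω | Y ω = y ∧ RZ ω = true} := by
      ext ω; simp only [hCdef, Set.mem_inter_iff, Set.mem_setOf_eq]; tauto
    -- positivity facts
    have hC0 : μ C ≠ 0 := by
      intro h
      exact hx (measure_mono_null (by rw [hDC]; exact Set.inter_subset_left) h)
    have hCtop : μ C ≠ ∞ := measure_ne_top μ _
    have hq0 : μ (C ∩ {ω | RZ ω = true}) ≠ 0 := by rw [← hDC]; exact hx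
    have hp0 : μ (C ∩ {ω | RX ω = true}) ≠ 0 := by
      have h1 := hpos x hx
      rw [cond_apply hDm] at h1
      have h2 : μ ({ω | X ω = x ∧ A ω = a ∧ Z ω = z ∧ RZ ω = true} ∩ {ω | RX ω = true}) ≠ 0 :=
        fun h => h1 (by rw [h, mul_zero])
      intro h
      refine h2 (measure_mono_null ?_ h)
      intro ω hω
      simp only [hCdef, Set.mem_inter_iff, Set.mem_setOf_eq] at hω ⊢
      tauto
    -- conditional independence, elementary form, multiplied out
    have hn : ∀ y' : 𝒴, μ (C ∩ {ω | RX ω = true ∧ Y ω = y' ∧ RZ ω = true})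
        = μ (C ∩ {ω | RX ω = true}) * ((μ C)⁻¹ * μ (C ∩ {ω | Y ω = y' ∧ RZ ω = true})) := by
      intro y'
      have h := hCI true y' true a z x hC0
      rw [cond_apply hCm, cond_apply hCm, cond_apply hCm] at h
      have h' : (μ C)⁻¹ * μ (C ∩ {ω | RX ω = true ∧ Y ω = y' ∧ RZ ω = true})
          = (μ C)⁻¹ * (μ (C ∩ {ω | RX ω = true})
              * ((μ C)⁻¹ * μ (C ∩ {ω | Y ω = y' ∧ RZ ω = true}))) := by
        rw [h]; ring
      exact (ENNReal.mul_right_inj (ENNReal.inv_ne_zero.2 hCtop)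
        (ENNReal.inv_ne_top.2 hC0)).mp h'
    -- summed version: μ F = (μ C)⁻¹ * p * q
    have hsum1 : C ∩ {ω | RX ω = true ∧ RZ ω = true}
        = ⋃ y' : 𝒴, C ∩ {ω | RX ω = true ∧ Y ω = y' ∧ RZ ω = true} := by
      ext ω
      simp only [Set.mem_iUnion, Set.mem_inter_iff, Set.mem_setOf_eq]
      constructor
      · rintro ⟨h1, h2, h3⟩; exact ⟨Y ω, h1, h2, rfl, h3⟩
      · rintro ⟨y', h1, h2, _, h3⟩; exact ⟨h1, h2, h3⟩
    have hsum2 : C ∩ {ω | RZ ω = true} = ⋃ y' : 𝒴, C ∩ {ω | Y ω = y' ∧ RZ ω = true} := by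
      ext ω
      simp only [Set.mem_iUnion, Set.mem_inter_iff, Set.mem_setOf_eq]
      constructor
      · rintro ⟨h1, h2⟩; exact ⟨Y ω, h1, rfl, h2⟩
      · rintro ⟨y', h1, _, h2⟩; exact ⟨h1, h2⟩
    have hf : μ (C ∩ {ω | RX ω = true ∧ RZ ω = true})
        = μ (C ∩ {ω | RX ω = true}) * ((μ C)⁻¹ * μ (C ∩ {ω | RZ ω = true})) := by
      rw [hsum1, measure_iUnion
        (fun i j hij => by
          apply Set.disjoint_left.2
          rintro ω ⟨_, _, h1, _⟩ ⟨_, _, h2, _⟩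
          exact hij (h1.symm.trans h2))
        (fun y' => show MeasurableSet (C ∩ {ω | RX ω = true ∧ Y ω = y' ∧ RZ ω = true}) from
          hCm.inter ((hRX (measurableSet_singleton true)).inter
          ((hY (measurableSet_singleton y')).inter (hRZ (measurableSet_singleton true)))))]
      calc ∑' y' : 𝒴, μ (C ∩ {ω | RX ω = true ∧ Y ω = y' ∧ RZ ω = true})
          = ∑' y' : 𝒴, μ (C ∩ {ω | RX ω = true}) * (μ C)⁻¹
              * μ (C ∩ {ω | Y ω = y' ∧ RZ ω = true}) := by
            refine tsum_congr fun y' => ?_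
            rw [hn y']; ring
        _ = μ (C ∩ {ω | RX ω = true}) * (μ C)⁻¹ * μ (⋃ y' : 𝒴, C ∩ {ω | Y ω = y' ∧ RZ ω = true}) := by
            rw [ENNReal.tsum_mul_left, measure_iUnion
              (fun i j hij => by
                apply Set.disjoint_left.2
                rintro ω ⟨_, h1, _⟩ ⟨_, h2, _⟩
                exact hij (h1.symm.trans h2))
              (fun y' => show MeasurableSet (C ∩ {ω | Y ω = y' ∧ RZ ω = true}) from
                hCm.inter ((hY (measurableSet_singleton y')).inter
                (hRZ (measurableSet_singleton true))))]
        _ = μ (C ∩ {ω | RX ω = true}) * ((μ C)⁻¹ * μ (C ∩ {ω | RZ ω = true})) := by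
            rw [← hsum2]; ring
    -- now the computation
    rw [cond_apply hFm, cond_apply hE, hFY, hFC, hED, hEY, hf, hn y]
    have hf0 : μ (C ∩ {ω | RX ω = true}) * ((μ C)⁻¹ * μ (C ∩ {ω | RZ ω = true})) ≠ 0 :=
      mul_ne_zero hp0 (mul_ne_zero (ENNReal.inv_ne_zero.2 hCtop) hq0)
    have hftop : μ (C ∩ {ω | RX ω = true}) * ((μ C)⁻¹ * μ (C ∩ {ω | RZ ω = true})) ≠ ∞ :=
      ENNReal.mul_ne_top (measure_ne_top μ _)
        (ENNReal.mul_ne_top (ENNReal.inv_ne_top.2 hC0) (measure_ne_top μ _))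
    set p := μ (C ∩ {ω | RX ω = true})
    set q := μ (C ∩ {ω | RZ ω = true})
    set m := μ (C ∩ {ω | Y ω = y ∧ RZ ω = true})
    set c := μ C
    have hm : m = (p * (c⁻¹ * q))⁻¹ * (p * (c⁻¹ * m)) * q := by
      have h1 : p * (c⁻¹ * q) * m = p * (c⁻¹ * m) * q := by ring
      calc m = p * (c⁻¹ * m) * q / (p * (c⁻¹ * q)) := (ENNReal.eq_div_iff hf0 hftop).2 h1
        _ = (p * (c⁻¹ * q))⁻¹ * (p * (c⁻¹ * m)) * q := by
            rw [div_eq_mul_inv]; ring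
    calc (μ {ω | Z ω = z ∧ RZ ω = true})⁻¹ * m
        = (μ {ω | Z ω = z ∧ RZ ω = true})⁻¹ * ((p * (c⁻¹ * q))⁻¹ * (p * (c⁻¹ * m)) * q) := by
          rw [← hm]
      _ = (p * (c⁻¹ * q))⁻¹ * (p * (c⁻¹ * m)) * ((μ {ω | Z ω = z ∧ RZ ω = true})⁻¹ * q) := by
          ring
  -- assemble
  rw [cond_apply hE]
  have hpart : {ω | Z ω = z ∧ RZ ω = true} ∩ {ω | Y ω = y ∧ A ω = a}
      = ⋃ x : 𝒳, {ω | Z ω = z ∧ RZ ω = true} ∩ {ω | Y ω = y ∧ A ω = a ∧ X ω = x} := by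
    ext ω
    simp only [Set.mem_iUnion, Set.mem_inter_iff, Set.mem_setOf_eq]
    constructor
    · rintro ⟨h1, h2, h3⟩; exact ⟨X ω, h1, h2, h3, rfl⟩
    · rintro ⟨x, h1, h2, h3, _⟩; exact ⟨h1, h2, h3⟩
  rw [hpart, measure_iUnion
    (fun i j hij => by
      apply Set.disjoint_left.2
      rintro ω ⟨_, _, _, h1⟩ ⟨_, _, _, h2⟩
      exact hij (h1.symm.trans h2))
    (fun x => show MeasurableSet ({ω | Z ω = z ∧ RZ ω = true} ∩
        {ω | Y ω = y ∧ A ω = a ∧ X ω = x}) from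
      hE.inter ((hY (measurableSet_singleton y)).inter
      ((hA (measurableSet_singleton a)).inter (hX (measurableSet_singleton x))))),
    ← ENNReal.tsum_mul_left]
  rw [← tsum_subtype_eq_of_support_subset (s := {x : 𝒳 |
      μ {ω | X ω = x ∧ A ω = a ∧ Z ω = z ∧ RZ ω = true} ≠ 0})
    (f := fun x : 𝒳 => (μ {ω | Z ω = z ∧ RZ ω = true})⁻¹
      * μ ({ω | Z ω = z ∧ RZ ω = true} ∩ {ω | Y ω = y ∧ A ω = a ∧ X ω = x}))
    (by
      intro x hx
      simp only [Function.mem_support, ne_eq] at hx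
      simp only [Set.mem_setOf_eq]
      intro h0
      refine hx ?_
      have hsub : {ω | Z ω = z ∧ RZ ω = true} ∩ {ω | Y ω = y ∧ A ω = a ∧ X ω = x}
          ⊆ {ω | X ω = x ∧ A ω = a ∧ Z ω = z ∧ RZ ω = true} := by
        intro ω hω
        simp only [Set.mem_inter_iff, Set.mem_setOf_eq] at hω ⊢
        tauto
      rw [measure_mono_null hsub h0, mul_zero])]
  exact tsum_congr fun x => key x.1 x.2
end

section
/- (Covering number of the log-linear softmax policy class.) Let 𝒜 be a nonempty finite set, 𝒯 a set of observations, m₀ ∈ ℕ, C₀ > 0, and φ₀ : 𝒜 × 𝒯 → ℝ^{m₀} with ‖φ₀(a, τ)‖₂ ≤ 1 for all (a, τ). Consider the policy class Π ⊆ { π_w : w ∈ ℝ^{m₀}, ‖w‖₂ ≤ C₀ }, where π_w(a | τ) = exp(⟨w, φ₀(a, τ)⟩) / Σ_{a′∈𝒜} exp(⟨w, φ₀(a′, τ)⟩), equipped with the sup distance d(π, π′) = sup_{(a,τ)} |π(a | τ) − π′(a | τ)|. Then for every t > 0 there exists a t-cover of Π with respect to d of cardinality at most (1 + 6C₀/t)^{m₀};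 equivalently, log N(t; Π, d) ≤ m₀·log(1 + 6C₀/t). -/
open scoped RealInnerProductSpace
open MeasureTheory Metric
open scoped ENNReal

/-- Packing bound: an `ε`-separated subset of the ball of radius `R` in `ℝ^m`
has cardinality at most `(1 + 2R/ε)^m`. -/
lemma aux_sep_card_le {m : ℕ} {R ε : ℝ} (hR : 0 < R) (hε : 0 < ε)
    (S : Finset (EuclideanSpace ℝ (Fin m)))
    (hS : ∀ x ∈ S, ‖x‖ ≤ R)
    (hsep : ∀ x ∈ S, ∀ y ∈ S, x ≠ y → ε ≤ ‖x - y‖) :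
    (S.card : ℝ) ≤ (1 + 2 * R / ε) ^ m := by
  rcases Nat.eq_zero_or_pos m with hm | hm
  · subst hm
    have : S.card ≤ 1 := by
      refine Finset.card_le_one.2 fun a ha b hb => ?_
      exact Subsingleton.elim a b
    have : (S.card : ℝ) ≤ 1 := by exact_mod_cast this
    simpa using this
  · haveI : Nontrivial (EuclideanSpace ℝ (Fin m)) := by
      have : 0 < Module.finrank ℝ (EuclideanSpace ℝ (Fin m)) := by
        simpa [finrank_euclideanSpace_fin] using hm
      exact Module.nontrivial_of_finrank_pos this
    set μ : Measure (EuclideanSpace ℝ (Fin m)) := volume with hμ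
    have hdisj : (S : Set (EuclideanSpace ℝ (Fin m))).PairwiseDisjoint
        (fun x => ball x (ε / 2)) := by
      intro x hx y hy hxy
      refine ball_disjoint_ball ?_
      have := hsep x (by simpa using hx) y (by simpa using hy) hxy
      rw [dist_eq_norm]
      linarith
    have h1 : ∑ x ∈ S, μ (ball x (ε / 2)) = μ (⋃ x ∈ S, ball x (ε / 2)) :=
      (measure_biUnion_finset hdisj fun _ _ => measurableSet_ball).symm
    have h2 : μ (⋃ x ∈ S, ball x (ε / 2)) ≤ μ (ball 0 (R + ε / 2)) := by
      refine measure_mono ?_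
      refine Set.iUnion₂_subset fun x hx => ?_
      refine ball_subset_ball' ?_
      have : dist x 0 ≤ R := by simpa [dist_eq_norm] using hS x hx
      linarith
    have hcenter : ∀ x : EuclideanSpace ℝ (Fin m),
        μ (ball x (ε / 2)) = μ (ball 0 (ε / 2)) := fun x =>
      Measure.addHaar_ball_center μ x _
    have hsum : ∑ x ∈ S, μ (ball x (ε / 2)) = (S.card : ℝ≥0∞) * μ (ball 0 (ε / 2)) := by
      simp [hcenter, Finset.sum_const, nsmul_eq_mul]
    have hball1 : μ (ball 0 (ε / 2)) =
        ENNReal.ofReal ((ε / 2) ^ Module.finrank ℝ (EuclideanSpace ℝ (Fin m))) *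
          μ (ball 0 1) := Measure.addHaar_ball μ 0 (by linarith)
    have hball2 : μ (ball 0 (R + ε / 2)) =
        ENNReal.ofReal ((R + ε / 2) ^ Module.finrank ℝ (EuclideanSpace ℝ (Fin m))) *
          μ (ball 0 1) := Measure.addHaar_ball μ 0 (by linarith)
    have hkey : (S.card : ℝ≥0∞) *
        ENNReal.ofReal ((ε / 2) ^ Module.finrank ℝ (EuclideanSpace ℝ (Fin m))) ≤
        ENNReal.ofReal ((R + ε / 2) ^ Module.finrank ℝ (EuclideanSpace ℝ (Fin m))) := by
      have hpos : 0 < μ (ball 0 1) := measure_ball_pos μ 0 one_pos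
      have hlt : μ (ball 0 1) < ⊤ := measure_ball_lt_top
      have h := h1.symm ▸ h2
      rw [hsum, hball1, hball2, ← mul_assoc] at h
      exact (ENNReal.mul_le_mul_iff_left hpos.ne' hlt.ne).1 h
    rw [finrank_euclideanSpace_fin] at hkey
    have hreal : (S.card : ℝ) * (ε / 2) ^ m ≤ (R + ε / 2) ^ m := by
      have h := hkey
      rw [← ENNReal.ofReal_natCast, ← ENNReal.ofReal_mul (by positivity)] at h
      exact (ENNReal.ofReal_le_ofReal_iff (by positivity)).1 h
    have hpow : (0:ℝ) < (ε / 2) ^ m := by positivity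
    rw [← le_div_iff₀ hpow] at hreal
    calc (S.card : ℝ) ≤ (R + ε / 2) ^ m / (ε / 2) ^ m := hreal
      _ = ((R + ε / 2) / (ε / 2)) ^ m := (div_pow _ _ _).symm
      _ = (1 + 2 * R / ε) ^ m := by
          congr 1
          field_simp
          ring

/-- Existence of an `ε`-net of the ball of radius `R` in `ℝ^m` of cardinality
at most `(1 + 2R/ε)^m`. -/
lemma aux_net_exists {m : ℕ} {R ε : ℝ} (hR : 0 < R) (hε : 0 < ε) :
    ∃ S : Finset (EuclideanSpace ℝ (Fin m)),
      (∀ w : EuclideanSpace ℝ (Fin m), ‖w‖ ≤ R → ∃ s ∈ S, ‖w - s‖ ≤ ε) ∧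
      (S.card : ℝ) ≤ (1 + 2 * R / ε) ^ m := by
  classical
  set P : Finset (EuclideanSpace ℝ (Fin m)) → Prop := fun S =>
    (∀ x ∈ S, ‖x‖ ≤ R) ∧ (∀ x ∈ S, ∀ y ∈ S, x ≠ y → ε ≤ ‖x - y‖) with hP
  have hbdd : ∀ S, P S → S.card ≤ ⌈(1 + 2 * R / ε) ^ m⌉₊ := by
    intro S hS
    have h1 := aux_sep_card_le hR hε S hS.1 hS.2
    have h2 : (S.card : ℝ) ≤ (⌈(1 + 2 * R / ε) ^ m⌉₊ : ℝ) := h1.trans (Nat.le_ceil _)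
    exact_mod_cast h2
  -- take a separated set of maximal cardinality
  have hne : ∃ n, ∃ S, P S ∧ S.card = n := ⟨0, ∅, ⟨by simp, by simp⟩, rfl⟩
  have hbdd' : BddAbove {n | ∃ S, P S ∧ S.card = n} := by
    refine ⟨⌈(1 + 2 * R / ε) ^ m⌉₊, fun n hn => ?_⟩
    obtain ⟨S, hS, rfl⟩ := hn
    exact hbdd S hS
  obtain ⟨S, hS, hScard⟩ := Nat.sSup_mem (s := {n | ∃ S, P S ∧ S.card = n})
    ⟨0, ⟨∅, ⟨by simp, by simp⟩, rfl⟩⟩ hbdd'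
  refine ⟨S, ?_, ?_⟩
  · intro w hw
    by_contra hcon
    push_neg at hcon
    have hwS : w ∉ S := fun hwS => by
      have := hcon w hwS
      simp at this
      linarith
    have hP' : P (insert w S) := by
      constructor
      · intro x hx
        rcases Finset.mem_insert.1 hx with rfl | hx
        · exact hw
        · exact hS.1 x hx
      · intro x hx y hy hxy
        rcases Finset.mem_insert.1 hx with hx' | hx' <;>
          rcases Finset.mem_insert.1 hy with hy' | hy'
        · exact absurd (hx'.trans hy'.symm) hxy
        · subst hx'; exact le_of_lt (hcon y hy')
        · subst hy'; rw [norm_sub_rev]; exact le_of_lt (hcon x hx')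
        · exact hS.2 x hx' y hy' hxy
    have : (insert w S).card ≤ sSup {n | ∃ S, P S ∧ S.card = n} :=
      le_csSup hbdd' ⟨insert w S, hP', rfl⟩
    rw [Finset.card_insert_of_notMem hwS, hScard] at this
    omega
  · exact aux_sep_card_le hR hε S hS.1 hS.2

/-- Softmax is Lipschitz-like: if the logits differ by at most `ε` pointwise,
the softmax probabilities differ by at most `exp (2ε) - 1`. -/
lemma aux_softmax_diff {𝒜 : Type*} [Fintype 𝒜] [Nonempty 𝒜]
    {x y : 𝒜 → ℝ} {ε : ℝ} (hε : 0 ≤ ε) (h : ∀ a, |x a - y a| ≤ ε) (a : 𝒜) :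
    |Real.exp (x a) / ∑ a', Real.exp (x a') -
      Real.exp (y a) / ∑ a', Real.exp (y a')| ≤ Real.exp (2 * ε) - 1 := by
  have hSx : (0:ℝ) < ∑ a', Real.exp (x a') :=
    Finset.sum_pos (fun i _ => Real.exp_pos _) Finset.univ_nonempty
  have hSy : (0:ℝ) < ∑ a', Real.exp (y a') :=
    Finset.sum_pos (fun i _ => Real.exp_pos _) Finset.univ_nonempty
  set p := Real.exp (x a) / ∑ a', Real.exp (x a') with hp
  set q := Real.exp (y a) / ∑ a', Real.exp (y a') with hq
  have hple : ∀ (u v : 𝒜 → ℝ), (∀ b, |u b - v b| ≤ ε) →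
      Real.exp (u a) / ∑ a', Real.exp (u a') ≤
        Real.exp (2 * ε) * (Real.exp (v a) / ∑ a', Real.exp (v a')) := by
    intro u v huv
    have hSu : (0:ℝ) < ∑ a', Real.exp (u a') :=
      Finset.sum_pos (fun i _ => Real.exp_pos _) Finset.univ_nonempty
    have hSv : (0:ℝ) < ∑ a', Real.exp (v a') :=
      Finset.sum_pos (fun i _ => Real.exp_pos _) Finset.univ_nonempty
    rw [div_le_iff₀ hSu, mul_comm (Real.exp (2*ε)), mul_assoc, div_mul_eq_mul_div,
      le_div_iff₀ hSv]
    have h1 : Real.exp (u a) ≤ Real.exp ε * Real.exp (v a) := by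
      rw [← Real.exp_add]
      apply Real.exp_le_exp.2
      have := (abs_le.1 (huv a)).2
      linarith
    have h2 : (∑ a', Real.exp (v a')) ≤ Real.exp ε * ∑ a', Real.exp (u a') := by
      rw [Finset.mul_sum]
      refine Finset.sum_le_sum fun b _ => ?_
      rw [← Real.exp_add]
      apply Real.exp_le_exp.2
      have := (abs_le.1 (huv b)).1
      linarith
    calc Real.exp (u a) * ∑ a', Real.exp (v a')
        ≤ (Real.exp ε * Real.exp (v a)) * (Real.exp ε * ∑ a', Real.exp (u a')) := by
          apply mul_le_mul h1 h2 (le_of_lt hSv) (by positivity)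
      _ = Real.exp (v a) * ((Real.exp ε * Real.exp ε) * ∑ a', Real.exp (u a')) := by ring
      _ = Real.exp (v a) * (Real.exp (2*ε) * ∑ a', Real.exp (u a')) := by
          rw [← Real.exp_add, two_mul]
  have hq1 : q ≤ 1 := by
    rw [hq, div_le_one hSy]
    exact Finset.single_le_sum (f := fun b => Real.exp (y b))
      (fun i _ => (Real.exp_pos _).le) (Finset.mem_univ a)
  have hp1 : p ≤ 1 := by
    rw [hp, div_le_one hSx]
    exact Finset.single_le_sum (f := fun b => Real.exp (x b))
      (fun i _ => (Real.exp_pos _).le) (Finset.mem_univ a)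
  have hq0 : 0 ≤ q := by positivity
  have hp0 : 0 ≤ p := by positivity
  have h1 : p ≤ Real.exp (2*ε) * q := hple x y h
  have h2 : q ≤ Real.exp (2*ε) * p := hple y x (fun b => by rw [abs_sub_comm]; exact h b)
  have he1 : (1:ℝ) ≤ Real.exp (2*ε) := Real.one_le_exp (by linarith)
  rw [abs_le]
  constructor
  · nlinarith
  · nlinarith

/-- `exp (2t/3) - 1 ≤ t` for `0 ≤ t ≤ 1`. -/
lemma aux_exp_ineq {t : ℝ} (ht : 0 ≤ t) (ht1 : t ≤ 1) :
    Real.exp (2 * (t / 3)) - 1 ≤ t := by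
  set s := 2 * (t / 3) with hs
  have hs0 : 0 ≤ s := by positivity
  have hs1 : |s| ≤ 1 := by rw [abs_of_nonneg hs0]; linarith
  have := Real.exp_bound hs1 (n := 2) (by norm_num)
  have hsum : ∑ i ∈ Finset.range 2, s ^ i / (i.factorial : ℝ) = 1 + s := by
    simp [Finset.sum_range_succ]
  rw [hsum] at this
  have h1 := (abs_le.1 this).2
  rw [sq_abs] at h1
  norm_num [Nat.factorial] at h1
  have hsq : s ^ 2 ≤ (4/9) * t := by
    rw [hs]; nlinarith
  rw [hs] at h1 hsq ⊢
  nlinarith [h1, hsq]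

/-- Covering number of the log-linear softmax policy class.
For the class of softmax policies `π_w(a | τ) = exp⟪w, φ₀(a, τ)⟫ / Σ_{a'} exp⟪w, φ₀(a', τ)⟫`
with `‖w‖₂ ≤ C₀` and `‖φ₀(a, τ)‖₂ ≤ 1`, and the sup distance over `(a, τ)`, for every
`t > 0` there is a `t`-cover of cardinality at most `(1 + 6C₀/t)^{m₀}`. -/
theorem covering_number_softmax_policy_class
    {𝒜 𝒯 : Type*} [Fintype 𝒜] [Nonempty 𝒜]
    (m₀ : ℕ) (C₀ : ℝ) (hC₀ : 0 < C₀)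
    (φ₀ : 𝒜 → 𝒯 → EuclideanSpace ℝ (Fin m₀)) (hφ₀ : ∀ a τ, ‖φ₀ a τ‖ ≤ 1)
    (Pol : Set (𝒜 → 𝒯 → ℝ))
    (hPol : Pol ⊆ {π : 𝒜 → 𝒯 → ℝ | ∃ w : EuclideanSpace ℝ (Fin m₀), ‖w‖ ≤ C₀ ∧
      π = fun a τ => Real.exp ⟪w, φ₀ a τ⟫ / (∑ a' : 𝒜, Real.exp ⟪w, φ₀ a' τ⟫)}) :
    ∀ t : ℝ, 0 < t →
      ∃ Θ : Set (𝒜 → 𝒯 → ℝ), Θ.Finite ∧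
        (∀ π ∈ Pol, ∃ θ ∈ Θ, ∀ (a : 𝒜) (τ : 𝒯), |π a τ - θ a τ| ≤ t) ∧
        (Θ.ncard : ℝ) ≤ (1 + 6 * C₀ / t) ^ m₀ := by
  classical
  intro t ht
  have hbase : (1:ℝ) ≤ 1 + 6 * C₀ / t := by
    have : 0 < 6 * C₀ / t := by positivity
    linarith
  rcases le_or_gt t 1 with ht1 | ht1
  · -- main case: t ≤ 1
    set ε := t / 3 with hεdef
    have hε : 0 < ε := by positivity
    obtain ⟨S, hScover, hScard⟩ := aux_net_exists (m := m₀) hC₀ hε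
    set F : EuclideanSpace ℝ (Fin m₀) → (𝒜 → 𝒯 → ℝ) := fun w =>
      fun a τ => Real.exp ⟪w, φ₀ a τ⟫ / (∑ a' : 𝒜, Real.exp ⟪w, φ₀ a' τ⟫) with hF
    refine ⟨F '' (S : Set (EuclideanSpace ℝ (Fin m₀))), (S.finite_toSet.image F), ?_, ?_⟩
    · intro π hπ
      obtain ⟨w, hw, rfl⟩ := hPol hπ
      obtain ⟨s, hsS, hws⟩ := hScover w hw
      refine ⟨F s, ⟨s, by simpa using hsS, rfl⟩, ?_⟩
      intro a τ
      have hdiff : ∀ b : 𝒜, |⟪w, φ₀ b τ⟫ - ⟪s, φ₀ b τ⟫| ≤ ε := by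
        intro b
        have h1 : ⟪w, φ₀ b τ⟫ - ⟪s, φ₀ b τ⟫ = ⟪w - s, φ₀ b τ⟫ := by
          rw [inner_sub_left]
        rw [h1]
        calc |⟪w - s, φ₀ b τ⟫| ≤ ‖w - s‖ * ‖φ₀ b τ‖ := abs_real_inner_le_norm _ _
          _ ≤ ε * 1 := by
              apply mul_le_mul hws (hφ₀ b τ) (norm_nonneg _) hε.le
          _ = ε := mul_one _
      have := aux_softmax_diff (x := fun b => ⟪w, φ₀ b τ⟫) (y := fun b => ⟪s, φ₀ b τ⟫)
        hε.le hdiff a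
      have hexp : Real.exp (2 * ε) - 1 ≤ t := aux_exp_ineq ht.le ht1
      calc |(fun a τ => Real.exp ⟪w, φ₀ a τ⟫ / (∑ a' : 𝒜, Real.exp ⟪w, φ₀ a' τ⟫)) a τ
            - F s a τ| = |Real.exp ⟪w, φ₀ a τ⟫ / (∑ a' : 𝒜, Real.exp ⟪w, φ₀ a' τ⟫) -
            Real.exp ⟪s, φ₀ a τ⟫ / (∑ a' : 𝒜, Real.exp ⟪s, φ₀ a' τ⟫)| := rfl
        _ ≤ Real.exp (2 * ε) - 1 := this
        _ ≤ t := hexp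
    · have him : (F '' (S : Set (EuclideanSpace ℝ (Fin m₀)))).ncard ≤ S.card := by
        have h := Set.ncard_image_le (f := F) S.finite_toSet
        simpa [Set.ncard_coe_finset] using h
      calc ((F '' (S : Set (EuclideanSpace ℝ (Fin m₀)))).ncard : ℝ)
          ≤ (S.card : ℝ) := by exact_mod_cast him
        _ ≤ (1 + 2 * C₀ / ε) ^ m₀ := hScard
        _ = (1 + 6 * C₀ / t) ^ m₀ := by
            congr 1
            rw [hεdef]
            field_simp
            ring
  · -- trivial case: t > 1, a single point suffices
    refine ⟨{fun _ _ => 0}, Set.finite_singleton _, ?_, ?_⟩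
    · intro π hπ
      obtain ⟨w, hw, rfl⟩ := hPol hπ
      refine ⟨_, rfl, ?_⟩
      intro a τ
      have hS : (0:ℝ) < ∑ a' : 𝒜, Real.exp ⟪w, φ₀ a' τ⟫ :=
        Finset.sum_pos (fun i _ => Real.exp_pos _) Finset.univ_nonempty
      have h0 : 0 ≤ Real.exp ⟪w, φ₀ a τ⟫ / (∑ a' : 𝒜, Real.exp ⟪w, φ₀ a' τ⟫) := by
        positivity
      have h1 : Real.exp ⟪w, φ₀ a τ⟫ / (∑ a' : 𝒜, Real.exp ⟪w, φ₀ a' τ⟫) ≤ 1 := by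
        rw [div_le_one hS]
        exact Finset.single_le_sum (f := fun b => Real.exp ⟪w, φ₀ b τ⟫)
          (fun i _ => (Real.exp_pos _).le) (Finset.mem_univ a)
      rw [sub_zero, abs_of_nonneg h0]
      linarith
    · simp only [Set.ncard_singleton, Nat.cast_one]
      calc (1:ℝ) = 1 ^ m₀ := (one_pow m₀).symm
        _ ≤ (1 + 6 * C₀ / t) ^ m₀ := pow_le_pow_left₀ (by norm_num) hbase m₀
end

section
/- (Deterministic part (i) of the uncertainty-quantification theorem.) In the minimax-estimation setting, assume the concentration hypotheses hold with constants η₁, …, η_K and set η² = Σ_{k=1}^K η_k². If h* ∈ H satisfies Σ_{k=1}^K ‖T_k h*‖²_{μ_k,2} ≤ ε_H², then the empirical loss satisfies L_D(h*) ≤ 2ε_H² + (2L_α² + 5/4)·η². In particular, for any threshold e_D > 2ε_H² + (2L_α² + 5/4)η², h* belongs to the confidence set { h ∈ H : L_D(h) ≤ inf_{h′∈H} L_D(h′) + e_D }. -/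
/-!
Conditioning on `𝒢_k` turns the population pairing into `∫ a_k(h) θ = ∫ θ · T_k h` (θ is
`𝒢_k`-measurable), and `∫ θ · T_k h ≤ ‖θ‖²/8 + 2‖T_k h‖²`. The concentration hypotheses replace the
empirical terms by their population counterparts at a cost of `η_k(L_α‖θ‖ + η_k)` and
`(‖θ‖² + η_k²)/2`; by Young's inequality `η_k L_α ‖θ‖ ≤ ‖θ‖²/8 + 2L_α²η_k²`, and the `-‖θ‖²/4` left
from the quadratic term absorbs both `‖θ‖²/8`. So each component of the loss is at most
`2‖T_k h‖² + (2L_α² + 5/4)η_k²`. Since `0 ∈ Θ_k`, every loss is nonnegative, hence so is its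
infimum over `H`, which gives the confidence-set statement.
-/

open MeasureTheory

noncomputable def empExp {α : Type*} {n : ℕ} (D : Fin n → α) (f : α → ℝ) : ℝ :=
  (∑ i, f (D i)) / n

/-- The component `L_{k,D}(h)` of the empirical loss, with `a = a_k(h)`. -/
noncomputable def empiricalMinimaxLoss {Ω : Type*} {n : ℕ} (D : Fin n → Ω) (Θ : Set (Ω → ℝ))
    (a : Ω → ℝ) : ℝ :=
  ⨆ θ : Θ, (empExp D (fun ω => a ω * (θ : Ω → ℝ) ω)
    - (1 / 2) * empExp D (fun ω => ((θ : Ω → ℝ) ω) ^ 2))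

lemma mul_le_sq_div_eight_add_two_mul_sq (x y : ℝ) : x * y ≤ x ^ 2 / 8 + 2 * y ^ 2 := by
  nlinarith [sq_nonneg (x - 4 * y)]

/-- Applied with `I₁ = ∫ a θ`, `I₂ = ‖θ‖²`, `t = ‖T h‖²` and `E₁, E₂` their empirical versions. -/
lemma sub_half_le_of_concentration {E₁ E₂ I₁ I₂ t L η : ℝ} (hI₂ : 0 ≤ I₂)
    (h₁ : |E₁ - I₁| ≤ η * (L * √I₂ + η)) (h₂ : |E₂ - I₂| ≤ 1 / 2 * (I₂ + η ^ 2))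
    (hI₁ : I₁ ≤ I₂ / 8 + 2 * t) :
    E₁ - 1 / 2 * E₂ ≤ 2 * t + (2 * L ^ 2 + 5 / 4) * η ^ 2 := by
  have young := mul_le_sq_div_eight_add_two_mul_sq √I₂ (L * η)
  rw [Real.sq_sqrt hI₂] at young
  linarith [(abs_le.mp h₁).2, (abs_le.mp h₂).1]

section

variable {Ω : Type*} {m mΩ : MeasurableSpace Ω} {μ : Measure Ω}

lemma integral_mul_le_of_memLp_two {f g : Ω → ℝ} (hf : MemLp f 2 μ) (hg : MemLp g 2 μ) :
    ∫ ω, f ω * g ω ∂μ ≤ (∫ ω, f ω ^ 2 ∂μ) / 8 + 2 * ∫ ω, g ω ^ 2 ∂μ := by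
  have h : ∫ ω, f ω * g ω ∂μ ≤ ∫ ω, (f ω ^ 2 / 8 + 2 * g ω ^ 2) ∂μ :=
    integral_mono (hf.integrable_mul hg)
      ((hf.integrable_sq.div_const 8).add (hg.integrable_sq.const_mul 2))
      fun ω => mul_le_sq_div_eight_add_two_mul_sq (f ω) (g ω)
  rwa [integral_add (hf.integrable_sq.div_const 8) (hg.integrable_sq.const_mul 2),
    integral_div, integral_const_mul] at h

lemma integral_mul_eq_integral_mul_condExp (hm : m ≤ mΩ) [SigmaFinite (μ.trim hm)]
    {a θ : Ω → ℝ} (hθ : StronglyMeasurable[m] θ) (hθa : Integrable (θ * a) μ)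
    (ha : Integrable a μ) :
    ∫ ω, a ω * θ ω ∂μ = ∫ ω, θ ω * μ[a | m] ω ∂μ := calc
  ∫ ω, a ω * θ ω ∂μ = ∫ ω, (θ * a) ω ∂μ := by simp only [Pi.mul_apply, mul_comm]
  _ = ∫ ω, μ[θ * a | m] ω ∂μ := (integral_condExp hm).symm
  _ = ∫ ω, θ ω * μ[a | m] ω ∂μ :=
    integral_congr_ae (condExp_mul_of_stronglyMeasurable_left hθ hθa ha)

lemma integral_mul_le_integral_condExp_sq (hm : m ≤ mΩ) [IsFiniteMeasure μ] {a θ : Ω → ℝ}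
    (ha : MemLp a 2 μ) (hθm : StronglyMeasurable[m] θ) (hθ : MemLp θ 2 μ) :
    ∫ ω, a ω * θ ω ∂μ ≤ (∫ ω, θ ω ^ 2 ∂μ) / 8 + 2 * ∫ ω, μ[a | m] ω ^ 2 ∂μ := by
  rw [integral_mul_eq_integral_mul_condExp hm hθm (hθ.integrable_mul ha)
    (ha.integrable one_le_two)]
  exact integral_mul_le_of_memLp_two hθ (ha.condExp one_le_two)

lemma empiricalMinimaxLoss_le [IsFiniteMeasure μ] {n : ℕ} (D : Fin n → Ω) {Θ : Set (Ω → ℝ)}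
    {a : Ω → ℝ} {L Lθ η : ℝ} (hm : m ≤ mΩ) (ha_meas : Measurable a) (ha_bdd : ∀ ω, |a ω| ≤ L)
    (hΘmeas : ∀ θ ∈ Θ, StronglyMeasurable[m] θ) (hΘbdd : ∀ θ ∈ Θ, ∀ ω, |θ ω| ≤ Lθ)
    (hconc1 : ∀ θ ∈ Θ, |empExp D (fun ω => a ω * θ ω) - ∫ ω, a ω * θ ω ∂μ|
      ≤ η * (L * √(∫ ω, θ ω ^ 2 ∂μ) + η))
    (hconc2 : ∀ θ ∈ Θ, |empExp D (fun ω => θ ω ^ 2) - ∫ ω, θ ω ^ 2 ∂μ|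
      ≤ 1 / 2 * ((∫ ω, θ ω ^ 2 ∂μ) + η ^ 2)) :
    empiricalMinimaxLoss D Θ a ≤ 2 * ∫ ω, μ[a | m] ω ^ 2 ∂μ + (2 * L ^ 2 + 5 / 4) * η ^ 2 := by
  have ha : MemLp a 2 μ := .of_bound ha_meas.aestronglyMeasurable L (ae_of_all _ ha_bdd)
  refine Real.iSup_le (fun ⟨θ, hθ⟩ => sub_half_le_of_concentration
    (integral_nonneg fun ω => sq_nonneg (θ ω)) (hconc1 θ hθ) (hconc2 θ hθ) ?_) (by positivity)
  exact integral_mul_le_integral_condExp_sq hm ha (hΘmeas θ hθ) <|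
    .of_bound ((hΘmeas θ hθ).mono hm).aestronglyMeasurable Lθ (ae_of_all _ (hΘbdd θ hθ))

end

lemma empiricalMinimaxLoss_nonneg {Ω : Type*} {n : ℕ} (D : Fin n → Ω) {Θ : Set (Ω → ℝ)}
    (a : Ω → ℝ) (hΘ : 0 ∈ Θ) : 0 ≤ empiricalMinimaxLoss D Θ a :=
  Real.iSup_nonneg' ⟨⟨0, hΘ⟩, by simp [empExp]⟩

theorem minimax_uq_realizable_in_confidence_set_general
    {K : ℕ} {Ωf : Fin K → Type*} [mΩ : ∀ k, MeasurableSpace (Ωf k)]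
    (μ : ∀ k, Measure (Ωf k)) [∀ k, IsProbabilityMeasure (μ k)]
    (m : ∀ k, MeasurableSpace (Ωf k)) (hm : ∀ k, m k ≤ mΩ k)
    (Lα Lθ : ℝ)
    -- the datasets
    (n : Fin K → ℕ) (D : ∀ k, Fin (n k) → Ωf k)
    -- the hypothesis class and the moment functions a_k(h)
    {H : Type*} (a : H → ∀ k, Ωf k → ℝ)
    (ha_meas : ∀ h k, Measurable (a h k))
    (ha_bdd : ∀ h k ω, |a h k ω| ≤ Lα)
    -- the dual (test-function) classes
    (Θ : ∀ k, Set (Ωf k → ℝ))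
    (hΘne : ∀ k, (Θ k).Nonempty)
    (hΘmeas : ∀ k, ∀ θ ∈ Θ k, StronglyMeasurable[m k] θ)
    (hΘbdd : ∀ k, ∀ θ ∈ Θ k, ∀ ω, |θ ω| ≤ Lθ)
    (hΘstar : ∀ k, ∀ θ ∈ Θ k, ∀ c : ℝ, 0 ≤ c → c ≤ 1 → c • θ ∈ Θ k)
    -- concentration hypotheses with constants η_k ≥ 0
    (η : Fin K → ℝ)
    (hconc1 : ∀ (h : H) (k : Fin K), ∀ θ ∈ Θ k,
      |empExp (D k) (fun ω => a h k ω * θ ω) - ∫ ω, a h k ω * θ ω ∂(μ k)|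
        ≤ η k * (Lα * Real.sqrt (∫ ω, (θ ω) ^ 2 ∂(μ k)) + η k))
    (hconc2 : ∀ (k : Fin K), ∀ θ ∈ Θ k,
      |empExp (D k) (fun ω => (θ ω) ^ 2) - ∫ ω, (θ ω) ^ 2 ∂(μ k)|
        ≤ (1 / 2) * ((∫ ω, (θ ω) ^ 2 ∂(μ k)) + (η k) ^ 2))
    -- the realizable hypothesis h*
    (εH : ℝ) (hstar : H)
    (hreal : (∑ k, ∫ ω, (((μ k)[a hstar k | m k]) ω) ^ 2 ∂(μ k)) ≤ εH ^ 2) :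
    (∑ k, ⨆ θ : (Θ k), (empExp (D k) (fun ω => a hstar k ω * (θ : Ωf k → ℝ) ω)
        - (1 / 2) * empExp (D k) (fun ω => ((θ : Ωf k → ℝ) ω) ^ 2)))
      ≤ 2 * εH ^ 2 + (2 * Lα ^ 2 + 5 / 4) * (∑ k, (η k) ^ 2) ∧
    ∀ eD : ℝ, 2 * εH ^ 2 + (2 * Lα ^ 2 + 5 / 4) * (∑ k, (η k) ^ 2) < eD →
      (∑ k, ⨆ θ : (Θ k), (empExp (D k) (fun ω => a hstar k ω * (θ : Ωf k → ℝ) ω)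
          - (1 / 2) * empExp (D k) (fun ω => ((θ : Ωf k → ℝ) ω) ^ 2)))
        ≤ (⨅ h' : H, ∑ k, ⨆ θ : (Θ k),
            (empExp (D k) (fun ω => a h' k ω * (θ : Ωf k → ℝ) ω)
              - (1 / 2) * empExp (D k) (fun ω => ((θ : Ωf k → ℝ) ω) ^ 2))) + eD := by
  have hloss (h : H) (k : Fin K) : empiricalMinimaxLoss (D k) (Θ k) (a h k)
      ≤ 2 * ∫ ω, (μ k)[a h k | m k] ω ^ 2 ∂μ k + (2 * Lα ^ 2 + 5 / 4) * η k ^ 2 :=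
    empiricalMinimaxLoss_le (D k) (hm k) ((ha_meas h k).mono (hm k) le_rfl) (ha_bdd h k)
      (hΘmeas k) (hΘbdd k) (hconc1 h k) (hconc2 k)
  have hloss_nonneg (h : H) (k : Fin K) : 0 ≤ empiricalMinimaxLoss (D k) (Θ k) (a h k) := by
    obtain ⟨θ, hθ⟩ := hΘne k
    exact empiricalMinimaxLoss_nonneg _ _ (by simpa using hΘstar k θ hθ 0 le_rfl zero_le_one)
  have hbound : ∑ k, empiricalMinimaxLoss (D k) (Θ k) (a hstar k)
      ≤ 2 * εH ^ 2 + (2 * Lα ^ 2 + 5 / 4) * ∑ k, η k ^ 2 := calc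
    _ ≤ ∑ k, (2 * ∫ ω, (μ k)[a hstar k | m k] ω ^ 2 ∂μ k + (2 * Lα ^ 2 + 5 / 4) * η k ^ 2) :=
      Finset.sum_le_sum fun k _ => hloss hstar k
    _ = 2 * ∑ k, ∫ ω, (μ k)[a hstar k | m k] ω ^ 2 ∂μ k
        + (2 * Lα ^ 2 + 5 / 4) * ∑ k, η k ^ 2 := by
      rw [Finset.sum_add_distrib, Finset.mul_sum, Finset.mul_sum]
    _ ≤ _ := by gcongr
  refine ⟨hbound, fun eD heD => (hbound.trans heD.le).trans (le_add_of_nonneg_left ?_)⟩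
  exact Real.iInf_nonneg fun h => Finset.sum_nonneg fun k _ => hloss_nonneg h k

/-- Deterministic part (i) of the uncertainty-quantification theorem.
In the minimax-estimation setting, under the concentration hypotheses, a realizable `h*`
with `Σ_k ‖T_k h*‖²_{μ_k,2} ≤ ε_H²` has empirical loss
`L_D(h*) ≤ 2ε_H² + (2L_α² + 5/4)η²`; in particular `h*` lies in the confidence set for any
threshold `e_D` exceeding this bound. -/
theorem minimax_uq_realizable_in_confidence_set
    {K : ℕ} {Ωf : Fin K → Type*} [mΩ : ∀ k, MeasurableSpace (Ωf k)]
    (μ : ∀ k, Measure (Ωf k)) [∀ k, IsProbabilityMeasure (μ k)]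
    (m : ∀ k, MeasurableSpace (Ωf k)) (hm : ∀ k, m k ≤ mΩ k)
    (Lα Lθ : ℝ) (hLα : 0 < Lα) (hLθ : 0 < Lθ)
    -- the datasets
    (n : Fin K → ℕ) (hn : ∀ k, 0 < n k) (D : ∀ k, Fin (n k) → Ωf k)
    -- the hypothesis class and the moment functions a_k(h)
    {H : Type*} (a : H → ∀ k, Ωf k → ℝ)
    (ha_meas : ∀ h k, Measurable (a h k))
    (ha_bdd : ∀ h k ω, |a h k ω| ≤ Lα)
    -- the dual (test-function) classes
    (Θ : ∀ k, Set (Ωf k → ℝ))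
    (hΘne : ∀ k, (Θ k).Nonempty)
    (hΘmeas : ∀ k, ∀ θ ∈ Θ k, StronglyMeasurable[m k] θ)
    (hΘbdd : ∀ k, ∀ θ ∈ Θ k, ∀ ω, |θ ω| ≤ Lθ)
    (hΘstar : ∀ k, ∀ θ ∈ Θ k, ∀ c : ℝ, 0 ≤ c → c ≤ 1 → c • θ ∈ Θ k)
    -- concentration hypotheses with constants η_k ≥ 0
    (η : Fin K → ℝ) (hη : ∀ k, 0 ≤ η k)
    (hconc1 : ∀ (h : H) (k : Fin K), ∀ θ ∈ Θ k,
      |empExp (D k) (fun ω => a h k ω * θ ω) - ∫ ω, a h k ω * θ ω ∂(μ k)|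
        ≤ η k * (Lα * Real.sqrt (∫ ω, (θ ω) ^ 2 ∂(μ k)) + η k))
    (hconc2 : ∀ (k : Fin K), ∀ θ ∈ Θ k,
      |empExp (D k) (fun ω => (θ ω) ^ 2) - ∫ ω, (θ ω) ^ 2 ∂(μ k)|
        ≤ (1 / 2) * ((∫ ω, (θ ω) ^ 2 ∂(μ k)) + (η k) ^ 2))
    -- the realizable hypothesis h*
    (εH : ℝ) (hstar : H)
    (hreal : (∑ k, ∫ ω, (((μ k)[a hstar k | m k]) ω) ^ 2 ∂(μ k)) ≤ εH ^ 2) :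
    (∑ k, ⨆ θ : (Θ k), (empExp (D k) (fun ω => a hstar k ω * (θ : Ωf k → ℝ) ω)
        - (1 / 2) * empExp (D k) (fun ω => ((θ : Ωf k → ℝ) ω) ^ 2)))
      ≤ 2 * εH ^ 2 + (2 * Lα ^ 2 + 5 / 4) * (∑ k, (η k) ^ 2) ∧
    ∀ eD : ℝ, 2 * εH ^ 2 + (2 * Lα ^ 2 + 5 / 4) * (∑ k, (η k) ^ 2) < eD →
      (∑ k, ⨆ θ : (Θ k), (empExp (D k) (fun ω => a hstar k ω * (θ : Ωf k → ℝ) ω)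
          - (1 / 2) * empExp (D k) (fun ω => ((θ : Ωf k → ℝ) ω) ^ 2)))
        ≤ (⨅ h' : H, ∑ k, ⨆ θ : (Θ k),
            (empExp (D k) (fun ω => a h' k ω * (θ : Ωf k → ℝ) ω)
              - (1 / 2) * empExp (D k) (fun ω => ((θ : Ωf k → ℝ) ω) ^ 2))) + eD :=
  minimax_uq_realizable_in_confidence_set_general (mΩ := mΩ) μ m hm Lα Lθ n D a ha_meas ha_bdd Θ
    hΘne hΘmeas hΘbdd hΘstar η hconc1 hconc2 εH hstar hreal
end
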